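/- arXiv:1611.08738 — 9 statements merged into one kernel-verified Lean document; each statement's English description precedes it below -/
import Mathlib

section
/- Let G be a simple graph and let a_0, a_1, ..., a_{ℓ-1} be a non-empty closed walk in G (indices taken modulo ℓ, with a_ℓ = a_0) whose underlying subgraph (the locus: vertices appearing in the walk, edges between consecutive vertices of the walk) contains no cycle. Let a be any vertex of the walk different from a_0, let i be the smallest index with 0 < i < ℓ and a_i = a, and let j be the largest such index. Then a_{j+1} = a_{i-1}. -/
variable {V : Type*}

/-- `a 0, …, a ℓ` is a walk in `G`: consecutive vertices adjacent (hence distinct). -/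
def IsWalk (G : SimpleGraph V) (a : ℕ → V) (ℓ : ℕ) : Prop :=
  ∀ i, i < ℓ → G.Adj (a i) (a (i + 1))

/-- `a 0, …, a (ℓ-1)` is a closed walk (tour) of length `ℓ` in `G`. -/
def IsTour (G : SimpleGraph V) (a : ℕ → V) (ℓ : ℕ) : Prop :=
  ∀ i, i < ℓ → G.Adj (a i) (a ((i + 1) % ℓ))

/-- A cycle (closed walk of length ≥ 3 with pairwise distinct vertices) all of whose
edges satisfy the edge relation `R`. -/
def IsCycleOn (R : V → V → Prop) (c : ℕ → V) (n : ℕ) : Prop :=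
  3 ≤ n ∧ (∀ i, i < n → ∀ j, j < n → c i = c j → i = j) ∧
    ∀ i, i < n → R (c i) (c ((i + 1) % n))

/-- Edge relation of the locus of the closed walk `a 0, …, a (ℓ-1)`. -/
def tourEdge (a : ℕ → V) (ℓ : ℕ) (u v : V) : Prop :=
  ∃ i, i < ℓ ∧ ((a i = u ∧ a ((i + 1) % ℓ) = v) ∨ (a i = v ∧ a ((i + 1) % ℓ) = u))

/-- Edge relation of the locus of the (open) walk `a 0, …, a ℓ`. -/
def walkEdge (a : ℕ → V) (ℓ : ℕ) (u v : V) : Prop :=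
  ∃ i, i < ℓ ∧ ((a i = u ∧ a (i + 1) = v) ∨ (a i = v ∧ a (i + 1) = u))

/-- The locus of the closed walk `a 0, …, a (ℓ-1)` contains no cycle. -/
def TourAcyclic (a : ℕ → V) (ℓ : ℕ) : Prop :=
  ¬ ∃ (c : ℕ → V) (n : ℕ), IsCycleOn (tourEdge a ℓ) c n

/-- The locus of the walk `a 0, …, a ℓ` contains no cycle. -/
def WalkAcyclic (a : ℕ → V) (ℓ : ℕ) : Prop :=
  ¬ ∃ (c : ℕ → V) (n : ℕ), IsCycleOn (walkEdge a ℓ) c n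

/-- Every cycle of `G` of length at most `ℓ` lies entirely within `D`. -/
def QuasiAcyclic (G : SimpleGraph V) (D : Set V) (ℓ : ℕ) : Prop :=
  ∀ (c : ℕ → V) (n : ℕ), n ≤ ℓ → IsCycleOn G.Adj c n → ∀ i, i < n → c i ∈ D

/-- Any two distinct vertices of `D` are adjacent. -/
def TotallyConnected (G : SimpleGraph V) (D : Set V) : Prop :=
  ∀ x ∈ D, ∀ y ∈ D, x ≠ y → G.Adj x y

/-! A detour around the tour from `a (j+1)` to `a (i-1)` avoids `a i`, because `i` and `j` are the
first and last visits of that vertex and `a 0 ≠ a i`. If `a (j+1) ≠ a (i-1)`, that detour together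
with the edges `a (i-1) – a i – a (j+1)` of the tour would close a cycle in the locus. -/

namespace SimpleGraph

variable {H : SimpleGraph V}

lemma Walk.IsCycle.isCycleOn {u : V} {p : H.Walk u u} (hp : p.IsCycle) :
    IsCycleOn H.Adj p.getVert p.length := by
  have hlen := hp.three_le_length
  refine ⟨hlen, fun s hs t ht hst => hp.getVert_injOn' (by simp only [Set.mem_ofPred_eq]; omega)
    (by simp only [Set.mem_ofPred_eq]; omega) hst, fun s hs => ?_⟩
  have hwrap : p.getVert ((s + 1) % p.length) = p.getVert (s + 1) := by
    rcases (show s + 1 ≤ p.length by omega).lt_or_eq with h | h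
    · rw [Nat.mod_eq_of_lt h]
    · rw [h, Nat.mod_self, Walk.getVert_zero, Walk.getVert_length]
  rw [hwrap]
  exact p.adj_getVert_succ hs

lemma exists_walk_support_subset_range {b : ℕ → V} :
    ∀ {m : ℕ}, (∀ t < m, H.Adj (b t) (b (t + 1))) →
      ∃ p : H.Walk (b 0) (b m), ∀ x ∈ p.support, ∃ t ≤ m, b t = x
  | 0, _ => ⟨Walk.nil, by simp⟩
  | m + 1, hb => by
    obtain ⟨p, hp⟩ := exists_walk_support_subset_range (m := m) fun t ht => hb t (by omega)
    refine ⟨p.concat (hb m (by omega)), fun x hx => ?_⟩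
    rw [Walk.support_concat, List.mem_append, List.mem_singleton] at hx
    rcases hx with hx | rfl
    · obtain ⟨t, ht, rfl⟩ := hp x hx
      exact ⟨t, by omega, rfl⟩
    · exact ⟨m + 1, le_rfl, rfl⟩

/-- In a forest, the unique path between two distinct neighbours `v`, `w` of `u` is `v – u – w`,
so every chain of adjacent vertices from `v` to `w` visits `u`. -/
lemma IsAcyclic.exists_eq_of_chain (hH : H.IsAcyclic) {u : V} {b : ℕ → V} {m : ℕ}
    (hb : ∀ t < m, H.Adj (b t) (b (t + 1))) (h0 : H.Adj u (b 0)) (hm : H.Adj u (b m))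
    (hne : b 0 ≠ b m) : ∃ t ≤ m, b t = u := by
  classical
  obtain ⟨p, hp⟩ := exists_walk_support_subset_range hb
  let q : H.Path (b 0) (b m) :=
    ⟨Walk.cons h0.symm (Walk.cons hm Walk.nil), by
      simp [Walk.cons_isPath_iff, hne, h0.ne, hm.ne, Ne.symm]⟩
  have hpq : p.toPath = q := (hH.subsingleton_path _ _).elim _ _
  apply hp u
  apply p.support_toPath_subset_support
  rw [hpq]
  simp [q]

end SimpleGraph

def tourLocus (a : ℕ → V) (ℓ : ℕ) : SimpleGraph V :=
  SimpleGraph.fromRel fun u v => ∃ k < ℓ, a k = u ∧ a ((k + 1) % ℓ) = v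

lemma TourAcyclic.isAcyclic_tourLocus {a : ℕ → V} {ℓ : ℕ} (hac : TourAcyclic a ℓ) :
    (tourLocus a ℓ).IsAcyclic := by
  intro v p hp
  refine hac ⟨p.getVert, p.length, ?_⟩
  obtain ⟨hlen, hinj, hadj⟩ := hp.isCycleOn
  refine ⟨hlen, hinj, fun s hs => ?_⟩
  obtain ⟨-, ⟨k, hk, h1, h2⟩ | ⟨k, hk, h1, h2⟩⟩ := hadj s hs
  · exact ⟨k, hk, Or.inl ⟨h1, h2⟩⟩
  · exact ⟨k, hk, Or.inr ⟨h1, h2⟩⟩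

lemma IsTour.tourLocus_adj {G : SimpleGraph V} {a : ℕ → V} {ℓ : ℕ} (ht : IsTour G a ℓ)
    (hℓ : 0 < ℓ) (n : ℕ) : (tourLocus a ℓ).Adj (a (n % ℓ)) (a ((n + 1) % ℓ)) := by
  have hn := ht (n % ℓ) (Nat.mod_lt n hℓ)
  rw [Nat.mod_add_mod] at hn
  exact ⟨hn.ne, Or.inl ⟨n % ℓ, Nat.mod_lt n hℓ, rfl, by rw [Nat.mod_add_mod]⟩⟩

/-- **Retracing in an acyclic closed walk** (Lemma 3.2 of the paper).  Let
`a 0, …, a (ℓ-1)` be a non-empty closed walk whose locus is acyclic, let `a i` be a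
vertex of the walk different from `a 0`, with `i` the least and `j` the largest index
in `(0, ℓ)` at which this vertex occurs.  Then `a (j+1) = a (i-1)` (indices mod ℓ). -/
theorem retrace (G : SimpleGraph V) (a : ℕ → V) (ℓ : ℕ) (hℓ : 0 < ℓ)
    (ht : IsTour G a ℓ) (hac : TourAcyclic a ℓ)
    (i j : ℕ) (hi0 : 0 < i) (hij : i ≤ j) (hjℓ : j < ℓ)
    (haij : a i = a j) (hne : a i ≠ a 0)
    (hmin : ∀ k, 0 < k → k < ℓ → a k = a i → i ≤ k)
    (hmax : ∀ k, 0 < k → k < ℓ → a k = a i → k ≤ j) :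
    a ((j + 1) % ℓ) = a (i - 1) := by
  by_contra hxy
  have hiℓ : i < ℓ := by omega
  have hocc : ∀ k < ℓ, a k = a i → i ≤ k ∧ k ≤ j := fun k hk hak => by
    rcases Nat.eq_zero_or_pos k with rfl | hk0
    · exact absurd hak.symm hne
    · exact ⟨hmin k hk0 hk hak, hmax k hk0 hk hak⟩
  have hend : (j + 1 + (ℓ + i - 2 - j)) % ℓ = i - 1 := by
    rw [show j + 1 + (ℓ + i - 2 - j) = i - 1 + ℓ by omega, Nat.add_mod_right,
      Nat.mod_eq_of_lt (by omega)]
  have hprev := ht.tourLocus_adj hℓ (i - 1)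
  rw [Nat.mod_eq_of_lt (by omega), show i - 1 + 1 = i by omega, Nat.mod_eq_of_lt hiℓ] at hprev
  have hnext := ht.tourLocus_adj hℓ j
  rw [Nat.mod_eq_of_lt hjℓ, ← haij] at hnext
  obtain ⟨t, htm, hat⟩ := hac.isAcyclic_tourLocus.exists_eq_of_chain
    (b := fun t => a ((j + 1 + t) % ℓ)) (m := ℓ + i - 2 - j)
    (fun t _ => by simpa only [add_assoc] using ht.tourLocus_adj hℓ (j + 1 + t))
    hnext (by simpa only [hend] using hprev.symm) (by simpa only [hend] using hxy)
  rcases lt_or_ge (j + 1 + t) ℓ with hlt | hge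
  · rw [Nat.mod_eq_of_lt hlt] at hat
    have := hocc _ hlt hat
    omega
  · rw [Nat.mod_eq_sub_mod hge, Nat.mod_eq_of_lt (by omega)] at hat
    have := hocc _ (by omega) hat
    omega
end

section
/- Let G be a simple graph with vertex set A and let D ⊆ A be a set of 'active' vertices such that any two distinct active vertices are adjacent in G. Suppose every cycle of G of length at most ℓ consists entirely of active vertices (G is ℓ-quasi-acyclic with respect to D). Let a_0, ..., a_{ℓ-1} be a closed walk in G of length ℓ (with a_ℓ = a_0), and suppose for some index i with 0 ≤ i < ℓ that a_0, ..., a_i are all active but a_{i+1} is passive (not in D). Let j be the smallest index with i < j < ℓ such that a_{j+1} is active. Then a_{i+1} = a_j and a_{j+1} = a_i. -/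
/-
Between leaving `D` after `a i` and re-entering it at `b = a (j+1)`, the closed walk runs
through passive vertices only, so every edge of `a i, …, a j, b` has a passive endpoint.
Such a walk cannot be closed up by an edge `b a i` that it does not already contain: removing
its detours would leave a cycle of length at most `ℓ` through a passive vertex. Since distinct
active vertices are adjacent, this forces `b = a i`. Then `a j a i` is an edge, so it is an
edge of the walk `a i, …, a j`, and the only one of these touching `a i` is `a i a (i+1)`.
-/

variable {V : Type*}

namespace SimpleGraph

variable {G : SimpleGraph V}

lemma Walk.IsCycle.isCycleOn_getVert {u : V} {p : G.Walk u u} (hp : p.IsCycle) :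
    IsCycleOn G.Adj p.getVert p.length := by
  have h3 := hp.three_le_length
  refine ⟨h3, fun x hx y hy hxy => hp.getVert_injOn' (by simp only [Set.mem_ofPred_eq]; omega)
    (by simp only [Set.mem_ofPred_eq]; omega) hxy, fun x hx => ?_⟩
  rcases Nat.lt_or_ge (x + 1) p.length with hlt | hge
  · rw [Nat.mod_eq_of_lt hlt]
    exact p.adj_getVert_succ hx
  · have hlast : x + 1 = p.length := by omega
    simpa [hlast, Nat.mod_self] using p.adj_getVert_succ hx

lemma exists_walk_of_adj_succ (a : ℕ → V) {s t : ℕ} (hst : s ≤ t)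
    (hadj : ∀ k, s ≤ k → k < t → G.Adj (a k) (a (k + 1))) :
    ∃ w : G.Walk (a s) (a t), w.length = t - s ∧
      ∀ e ∈ w.edges, ∃ k, s ≤ k ∧ k < t ∧ e = s(a k, a (k + 1)) := by
  induction t, hst using Nat.le_induction with
  | base => exact ⟨Walk.nil, by simp, by simp⟩
  | succ t hst ih =>
    obtain ⟨w, hwl, hwe⟩ := ih fun k hk hkt => hadj k hk (by omega)
    refine ⟨w.concat (hadj t hst (by omega)), by rw [Walk.length_concat, hwl]; omega, ?_⟩
    intro e he
    rw [Walk.edges_concat, List.concat_eq_append, List.mem_append, List.mem_singleton] at he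
    rcases he with he | rfl
    · obtain ⟨k, hsk, hkt, rfl⟩ := hwe e he
      exact ⟨k, hsk, by omega, rfl⟩
    · exact ⟨t, hst, by omega, rfl⟩

end SimpleGraph

open SimpleGraph

namespace QuasiAcyclic

variable {G : SimpleGraph V} {D : Set V} {ℓ : ℕ}

lemma mem_of_mem_support (hqa : QuasiAcyclic G D ℓ)
    {u x : V} {p : G.Walk u u} (hp : p.IsCycle) (hlen : p.length ≤ ℓ) (hx : x ∈ p.support) :
    x ∈ D := by
  obtain ⟨n, rfl, -⟩ := Walk.mem_support_iff_exists_getVert.mp hx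
  have hall := hqa _ _ hlen hp.isCycleOn_getVert
  rcases Nat.lt_or_ge n p.length with hlt | hge
  · exact hall n hlt
  · rw [p.getVert_of_length_le hge, ← p.getVert_zero]
    exact hall 0 (by have := hp.three_le_length; omega)

lemma mem_edges_of_adj (hqa : QuasiAcyclic G D ℓ)
    {u v : V} (p : G.Walk u v) (h : G.Adj v u) (hlen : p.length < ℓ)
    (hpass : ∀ e ∈ p.edges, ∃ x ∈ e, x ∉ D) : s(v, u) ∈ p.edges := by
  classical
  -- otherwise `cons h p.bypass` is a cycle of length `≤ ℓ` through a passive vertex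
  by_contra hnot
  have hcyc : (Walk.cons h p.bypass).IsCycle :=
    (Walk.cons_isCycle_iff _ h).mpr
      ⟨p.bypass_isPath, fun he => hnot (p.edges_bypass_subset_edges he)⟩
  have hshort : (Walk.cons h p.bypass).length ≤ ℓ := by
    have := p.length_bypass_le_length
    simp only [Walk.length_cons]
    omega
  have hne : p.bypass.edges ≠ [] := by
    have := hcyc.three_le_length
    simp only [Walk.length_cons] at this
    rw [Ne, ← List.length_eq_zero_iff, Walk.length_edges]
    omega
  obtain ⟨e, he⟩ := List.exists_mem_of_ne_nil _ hne
  obtain ⟨x, hxe, hxD⟩ := hpass e (p.edges_bypass_subset_edges he)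
  apply hxD
  refine hqa.mem_of_mem_support hcyc hshort ?_
  rw [Walk.support_cons]
  exact List.mem_cons_of_mem _ (p.bypass.mem_support_of_mem_edges he hxe)

lemma eq_of_walk (hqa : QuasiAcyclic G D ℓ) (htc : TotallyConnected G D)
    {u v : V} (hu : u ∈ D) (hv : v ∈ D) (p : G.Walk u v) (hlen : p.length < ℓ)
    (hpass : ∀ e ∈ p.edges, ∃ x ∈ e, x ∉ D) : u = v := by
  by_contra hne
  obtain ⟨x, hx, hxD⟩ :=
    hpass _ (hqa.mem_edges_of_adj p (htc _ hv _ hu (Ne.symm hne)) hlen hpass)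
  rcases Sym2.mem_iff.mp hx with rfl | rfl <;> contradiction

end QuasiAcyclic

lemma notMem_of_lt_of_le_of_minimal {D : Set V} {a : ℕ → V} {ℓ i j k : ℕ} (hjℓ : j < ℓ)
    (hpass : a (i + 1) ∉ D) (hjmin : ∀ k, i < k → k < ℓ → a ((k + 1) % ℓ) ∈ D → j ≤ k)
    (hik : i < k) (hkj : k ≤ j) : a k ∉ D := by
  intro hk
  rcases Nat.eq_or_lt_of_le (Nat.succ_le_of_lt hik) with rfl | hlt
  · exact hpass hk
  · have := hjmin (k - 1) (by omega) (by omega)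
      (by rwa [Nat.sub_add_cancel (by omega), Nat.mod_eq_of_lt (by omega)])
    omega

theorem enter_exit_general (G : SimpleGraph V) (D : Set V) (ℓ : ℕ)
    (htc : TotallyConnected G D) (hqa : QuasiAcyclic G D ℓ)
    (a : ℕ → V) (ht : IsTour G a ℓ)
    (i : ℕ) (hact : ∀ k, k ≤ i → a k ∈ D) (hpass : a (i + 1) ∉ D)
    (j : ℕ) (hij : i < j) (hjℓ : j < ℓ) (hj : a ((j + 1) % ℓ) ∈ D)
    (hjmin : ∀ k, i < k → k < ℓ → a ((k + 1) % ℓ) ∈ D → j ≤ k) :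
    a (i + 1) = a j ∧ a ((j + 1) % ℓ) = a i := by
  have hai : a i ∈ D := hact i le_rfl
  have hpassive : ∀ k, i < k → k ≤ j → a k ∉ D := fun k =>
    notMem_of_lt_of_le_of_minimal hjℓ hpass hjmin
  obtain ⟨w, hwl, hwe⟩ := exists_walk_of_adj_succ (G := G) a hij.le fun k _ hkj => by
    simpa [Nat.mod_eq_of_lt (show k + 1 < ℓ by omega)] using ht k (by omega)
  have hwpass : ∀ e ∈ w.edges, ∃ x ∈ e, x ∉ D := by
    intro e he
    obtain ⟨k, hik, hkj, rfl⟩ := hwe e he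
    exact ⟨a (k + 1), Sym2.mem_mk_right _ _, hpassive (k + 1) (by omega) (by omega)⟩
  have hreenter : a ((j + 1) % ℓ) = a i := by
    by_cases hwrap : i = 0 ∧ j + 1 = ℓ
    · rw [hwrap.2, Nat.mod_self, hwrap.1]
    refine (hqa.eq_of_walk htc hai hj (w.concat (ht j hjℓ))
      (by rw [Walk.length_concat]; omega) fun e he => ?_).symm
    rw [Walk.edges_concat, List.concat_eq_append, List.mem_append, List.mem_singleton] at he
    rcases he with he | rfl
    · exact hwpass e he
    · exact ⟨a j, Sym2.mem_mk_left _ _, hpassive j hij le_rfl⟩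
  refine ⟨?_, hreenter⟩
  have hback : G.Adj (a j) (a i) := hreenter ▸ ht j hjℓ
  obtain ⟨k, hik, hkj, hedge⟩ := hwe _ <| hqa.mem_edges_of_adj w hback (by omega) hwpass
  rcases Sym2.eq_iff.mp hedge with ⟨-, hai_eq⟩ | ⟨hjk, hai_eq⟩
  · exact absurd (hai_eq ▸ hai) (hpassive (k + 1) (by omega) (by omega))
  · obtain rfl : k = i := by
      by_contra hki
      exact hpassive k (by omega) (by omega) (hai_eq ▸ hai)
    exact hjk.symm

/-- **Exiting the database means re-entering at the same point** (Lemma 3.3).  In an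
ℓ-quasi-acyclic graph with totally connected active set `D`, if a closed walk of length
ℓ has `a 0, …, a i` active and `a (i+1)` passive, and `j` is the least index in
`(i, ℓ)` with `a (j+1)` active, then `a (i+1) = a j` and `a (j+1) = a i`. -/
theorem enter_exit (G : SimpleGraph V) (D : Set V) (ℓ : ℕ)
    (htc : TotallyConnected G D) (hqa : QuasiAcyclic G D ℓ)
    (a : ℕ → V) (ht : IsTour G a ℓ)
    (i : ℕ) (hiℓ : i < ℓ) (hact : ∀ k, k ≤ i → a k ∈ D) (hpass : a (i + 1) ∉ D)
    (j : ℕ) (hij : i < j) (hjℓ : j < ℓ) (hj : a ((j + 1) % ℓ) ∈ D)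
    (hjmin : ∀ k, i < k → k < ℓ → a ((k + 1) % ℓ) ∈ D → j ≤ k) :
    a (i + 1) = a j ∧ a ((j + 1) % ℓ) = a i :=
  enter_exit_general G D ℓ htc hqa a ht i hact hpass j hij hjℓ hj hjmin
end

section
/- Let G be a simple graph with vertex set A and a totally connected subset D of active vertices, and suppose G is ℓ-quasi-acyclic (every cycle of length at most ℓ is entirely contained in D). Let a_0, ..., a_{ℓ-1} be a closed walk of length ℓ (with a_ℓ = a_0), and suppose for some i with 0 ≤ i < ℓ that a_0, ..., a_i are all passive but a_{i+1} is active. Let j be the largest index with i < j < ℓ such that a_j is active and a_{j+1} is passive. Then a_{i+1} = a_j and a_{j+1} = a_i. -/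
variable {V : Type*}

/-- **Entering the database means exiting at the same point** (Lemma 3.4).  In an
ℓ-quasi-acyclic graph with totally connected active set `D`, if a closed walk of length
ℓ has `a 0, …, a i` passive and `a (i+1)` active, and `j` is the largest index in
`(i, ℓ)` with `a j` active and `a (j+1)` passive, then `a (i+1) = a j` and
`a (j+1) = a i`. -/
lemma key_passive_path (G : SimpleGraph V) (D : Set V) (ℓ : ℕ)
    (htc : TotallyConnected G D) (hqa : QuasiAcyclic G D ℓ) :
    ∀ m : ℕ, ∀ p : ℕ → V, (∀ t, t < m → G.Adj (p t) (p (t+1))) →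
      (∀ t, t ≤ m → p t ∉ D) →
      ∀ d e, d ∈ D → e ∈ D → G.Adj d (p 0) → G.Adj (p m) e →
      m + 2 ≤ ℓ → (d ≠ e → m + 3 ≤ ℓ) → d = e ∧ p 0 = p m := by
  intro m
  induction m using Nat.strong_induction_on with
  | _ m IH =>
    intro p hw hp d e hd he hdp hpe h2 h3
    by_cases hinj : ∀ s t, s ≤ m → t ≤ m → p s = p t → s = t
    · -- injective case
      have hde : d = e := by
        by_contra hne
        set c : ℕ → V := fun x => if x = 0 then d else if x ≤ m + 1 then p (x - 1) else e
          with hc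
        have hc0 : c 0 = d := by simp [hc]
        have hcp : ∀ x, 1 ≤ x → x ≤ m + 1 → c x = p (x - 1) := by
          intro x h1 hxm
          show (if x = 0 then d else if x ≤ m + 1 then p (x - 1) else e) = p (x - 1)
          rw [if_neg (by omega), if_pos hxm]
        have hce : c (m + 2) = e := by
          show (if m + 2 = 0 then d else if m + 2 ≤ m + 1 then p (m + 2 - 1) else e) = e
          rw [if_neg (by omega), if_neg (by omega)]
        have hcyc : IsCycleOn G.Adj c (m + 3) := by
          refine ⟨by omega, ?_, ?_⟩
          · intro x hx y hy hxy
            have hx3 : x = 0 ∨ (1 ≤ x ∧ x ≤ m + 1) ∨ x = m + 2 := by omega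
            have hy3 : y = 0 ∨ (1 ≤ y ∧ y ≤ m + 1) ∨ y = m + 2 := by omega
            rcases hx3 with rfl | ⟨hx1, hx2⟩ | rfl <;>
              rcases hy3 with rfl | ⟨hy1, hy2⟩ | rfl
            · rfl
            · rw [hc0, hcp y hy1 hy2] at hxy
              exact absurd (hxy ▸ hd) (hp (y - 1) (by omega))
            · rw [hc0, hce] at hxy; exact absurd hxy hne
            · rw [hc0, hcp x hx1 hx2] at hxy
              exact absurd (hxy ▸ hd) (hp (x - 1) (by omega))
            · rw [hcp x hx1 hx2, hcp y hy1 hy2] at hxy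
              have := hinj (x - 1) (y - 1) (by omega) (by omega) hxy
              omega
            · rw [hcp x hx1 hx2, hce] at hxy
              exact absurd (hxy ▸ he) (hp (x - 1) (by omega))
            · rw [hc0, hce] at hxy; exact absurd hxy.symm hne
            · rw [hcp y hy1 hy2, hce] at hxy
              exact absurd (hxy ▸ he) (hp (y - 1) (by omega))
            · rfl
          · intro x hx
            have hx4 : x = 0 ∨ (1 ≤ x ∧ x ≤ m) ∨ x = m + 1 ∨ x = m + 2 := by omega
            rcases hx4 with rfl | ⟨hx1, hx2⟩ | rfl | rfl
            · rw [Nat.mod_eq_of_lt (by omega : 0 + 1 < m + 3), hc0,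
                hcp 1 le_rfl (by omega)]
              exact hdp
            · rw [Nat.mod_eq_of_lt (by omega : x + 1 < m + 3), hcp x hx1 (by omega),
                hcp (x + 1) (by omega) (by omega)]
              have := hw (x - 1) (by omega)
              rw [show x - 1 + 1 = x by omega] at this
              rw [show x + 1 - 1 = x by omega]
              exact this
            · rw [Nat.mod_eq_of_lt (by omega : m + 1 + 1 < m + 3),
                hcp (m + 1) (by omega) le_rfl, hce]
              rw [show m + 1 - 1 = m by omega]
              exact hpe
            · rw [show (m + 2 + 1) % (m + 3) = 0 by simp, hce, hc0]
              exact htc e he d hd (fun h => hne h.symm)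
        have h1 := hqa c (m + 3) (h3 hne) hcyc 1 (by omega)
        rw [hcp 1 le_rfl (by omega)] at h1
        exact hp 0 (by omega) h1
      refine ⟨hde, ?_⟩
      rcases Nat.eq_zero_or_pos m with rfl | hm1
      · rfl
      exfalso
      set c : ℕ → V := fun x => if x = 0 then d else p (x - 1) with hc
      have hc0 : c 0 = d := by simp [hc]
      have hcp : ∀ x, 1 ≤ x → c x = p (x - 1) := by
        intro x h1
        show (if x = 0 then d else p (x - 1)) = p (x - 1)
        rw [if_neg (by omega)]
      have hcyc : IsCycleOn G.Adj c (m + 2) := by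
        refine ⟨by omega, ?_, ?_⟩
        · intro x hx y hy hxy
          have hx3 : x = 0 ∨ 1 ≤ x := by omega
          have hy3 : y = 0 ∨ 1 ≤ y := by omega
          rcases hx3 with rfl | hx1 <;> rcases hy3 with rfl | hy1
          · rfl
          · rw [hc0, hcp y hy1] at hxy
            exact absurd (hxy ▸ hd) (hp (y - 1) (by omega))
          · rw [hc0, hcp x hx1] at hxy
            exact absurd (hxy ▸ hd) (hp (x - 1) (by omega))
          · rw [hcp x hx1, hcp y hy1] at hxy
            have := hinj (x - 1) (y - 1) (by omega) (by omega) hxy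
            omega
        · intro x hx
          have hx4 : x = 0 ∨ (1 ≤ x ∧ x ≤ m) ∨ x = m + 1 := by omega
          rcases hx4 with rfl | ⟨hx1, hx2⟩ | rfl
          · rw [Nat.mod_eq_of_lt (by omega : 0 + 1 < m + 2), hc0, hcp 1 le_rfl]
            exact hdp
          · rw [Nat.mod_eq_of_lt (by omega : x + 1 < m + 2), hcp x hx1,
              hcp (x + 1) (by omega)]
            have := hw (x - 1) (by omega)
            rw [show x - 1 + 1 = x by omega] at this
            rw [show x + 1 - 1 = x by omega]
            exact this
          · rw [show (m + 1 + 1) % (m + 2) = 0 by simp, hcp (m + 1) (by omega), hc0]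
            rw [show m + 1 - 1 = m by omega]
            exact hde ▸ hpe
      have h1 := hqa c (m + 2) (by omega) hcyc 1 (by omega)
      rw [hcp 1 le_rfl] at h1
      exact hp 0 (by omega) h1
    · -- repeated vertex: shorten the walk
      push_neg at hinj
      obtain ⟨s₀, t₀, hs₀, ht₀, heq₀, hne₀⟩ := hinj
      obtain ⟨s, t, hst, hsm, htm, heq⟩ :
          ∃ s t, s < t ∧ s ≤ m ∧ t ≤ m ∧ p s = p t := by
        rcases lt_or_gt_of_ne hne₀ with h | h
        · exact ⟨s₀, t₀, h, hs₀, ht₀, heq₀⟩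
        · exact ⟨t₀, s₀, h, ht₀, hs₀, heq₀.symm⟩
      set q : ℕ → V := fun x => if x ≤ s then p x else p (x + (t - s)) with hqdef
      have hqa' : ∀ x, x ≤ s → q x = p x := by
        intro x hx
        show (if x ≤ s then p x else p (x + (t - s))) = p x
        rw [if_pos hx]
      have hqb : ∀ x, s < x → q x = p (x + (t - s)) := by
        intro x hx
        show (if x ≤ s then p x else p (x + (t - s))) = p (x + (t - s))
        rw [if_neg (by omega)]
      set m' := m - (t - s) with hm'def
      have hm' : m' < m := by omega
      have hwq : ∀ x, x < m' → G.Adj (q x) (q (x + 1)) := by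
        intro x hx
        rcases Nat.lt_trichotomy x s with h | rfl | h
        · rw [hqa' x (by omega), hqa' (x + 1) (by omega)]
          exact hw x (by omega)
        · rw [hqa' x le_rfl, hqb (x + 1) (by omega), heq]
          rw [show x + 1 + (t - x) = t + 1 by omega]
          exact hw t (by omega)
        · rw [hqb x h, hqb (x + 1) (by omega)]
          rw [show x + 1 + (t - s) = x + (t - s) + 1 by omega]
          exact hw (x + (t - s)) (by omega)
      have hpq : ∀ x, x ≤ m' → q x ∉ D := by
        intro x hx
        by_cases h : x ≤ s
        · rw [hqa' x h]; exact hp x (by omega)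
        · rw [hqb x (by omega)]; exact hp (x + (t - s)) (by omega)
      have hq0 : q 0 = p 0 := hqa' 0 (Nat.zero_le s)
      have hqm : q m' = p m := by
        rcases Nat.lt_or_ge s m' with h | h
        · rw [hqb m' h, show m' + (t - s) = m by omega]
        · have hsm' : m' = s := by omega
          have htm' : t = m := by omega
          rw [hqa' m' (by omega), hsm', heq, htm']
      have := IH m' hm' q hwq hpq d e hd he (hq0 ▸ hdp) (hqm ▸ hpe)
        (by omega) (fun h => by have := h3 h; omega)
      exact ⟨this.1, by rw [← hq0, ← hqm]; exact this.2⟩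

/-- main -/
theorem exit_enter (G : SimpleGraph V) (D : Set V) (ℓ : ℕ)
    (htc : TotallyConnected G D) (hqa : QuasiAcyclic G D ℓ)
    (a : ℕ → V) (ht : IsTour G a ℓ)
    (i : ℕ) (hiℓ : i < ℓ) (hpass : ∀ k, k ≤ i → a k ∉ D) (hact : a (i + 1) ∈ D)
    (j : ℕ) (hij : i < j) (hjℓ : j < ℓ) (hja : a j ∈ D) (hjp : a ((j + 1) % ℓ) ∉ D)
    (hjmax : ∀ k, i < k → k < ℓ → a k ∈ D → a ((k + 1) % ℓ) ∉ D → k ≤ j) :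
    a (i + 1) = a j ∧ a ((j + 1) % ℓ) = a i := by
    -- main proof
    have hℓ2 : 2 ≤ ℓ := by omega
    -- every vertex strictly between j and ℓ is passive
    have hpassB : ∀ r k, j < k → k < ℓ → ℓ ≤ k + r → a k ∉ D := by
      intro r
      induction r with
      | zero => intro k h1 h2 h3; omega
      | succ r IHr =>
        intro k h1 h2 h3 hk
        have hnext : a ((k + 1) % ℓ) ∉ D := by
          by_cases hkl : k + 1 = ℓ
          · rw [show (k + 1) % ℓ = 0 by rw [hkl]; exact Nat.mod_self ℓ]
            exact hpass 0 (Nat.zero_le i)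
          · rw [Nat.mod_eq_of_lt (by omega)]
            exact IHr (k + 1) (by omega) (by omega) (by omega)
        have := hjmax k (by omega) h2 hk hnext
        omega
    have hpassHigh : ∀ k, j < k → k < ℓ → a k ∉ D :=
      fun k h1 h2 => hpassB ℓ k h1 h2 (by omega)
    set m := ℓ + i - (j + 1) with hm
    set p : ℕ → V := fun t => a ((j + 1 + t) % ℓ) with hpdef
    have hpval : ∀ t, p t = a ((j + 1 + t) % ℓ) := fun t => rfl
    have hwp : ∀ t, t < m → G.Adj (p t) (p (t + 1)) := by
      intro t htm
      rw [hpval, hpval]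
      have hx : (j + 1 + t) % ℓ < ℓ := Nat.mod_lt _ (by omega)
      have hstep : (j + 1 + (t + 1)) % ℓ = ((j + 1 + t) % ℓ + 1) % ℓ := by
        conv_lhs => rw [show j + 1 + (t + 1) = (j + 1 + t) + 1 by omega,
          Nat.add_mod (j + 1 + t) 1 ℓ, Nat.mod_eq_of_lt (by omega : 1 < ℓ)]
      rw [hstep]
      exact ht _ hx
    have hpp : ∀ t, t ≤ m → p t ∉ D := by
      intro t htm
      rw [hpval]
      by_cases h : j + 1 + t < ℓ
      · rw [Nat.mod_eq_of_lt h]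
        exact hpassHigh (j + 1 + t) (by omega) h
      · have h2ℓ : j + 1 + t - ℓ < ℓ := by omega
        rw [Nat.mod_eq_sub_mod (by omega), Nat.mod_eq_of_lt h2ℓ]
        exact hpass (j + 1 + t - ℓ) (by omega)
    have hp0 : p 0 = a ((j + 1) % ℓ) := by rw [hpval]
    have hpm : p m = a i := by
      rw [hpval, show j + 1 + m = ℓ + i by omega, Nat.add_mod_left,
        Nat.mod_eq_of_lt hiℓ]
    have hdp : G.Adj (a j) (p 0) := by rw [hp0]; exact ht j hjℓ
    have hpe : G.Adj (p m) (a (i + 1)) := by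
      rw [hpm]
      have := ht i hiℓ
      rwa [Nat.mod_eq_of_lt (by omega : i + 1 < ℓ)] at this
    have hmain := key_passive_path G D ℓ htc hqa m p hwp hpp (a j) (a (i + 1))
      hja hact hdp hpe (by omega)
      (by
        intro hne
        have hji : j ≠ i + 1 := by rintro rfl; exact hne rfl
        omega)
    exact ⟨hmain.1.symm, by rw [← hp0, ← hpm]; exact hmain.2⟩
end

section
/- Let G be a simple graph with a totally connected active-vertex set D, and suppose G is ℓ-quasi-acyclic. Let a_0, ..., a_{ℓ-1} be a closed walk of length ℓ containing at least one active and at least one passive vertex, and suppose a_0 is passive. Let b = a_i be the first active vertex of the walk and let j be the largest index with a_j = b. Then: (i) the segment a_j, a_{j+1}, ..., a_{ℓ-1}, a_0 is a walk from b to a_0 in which b occurs exactly once and whose locus is acyclic; (ii) the segment a_0, ..., a_{i-1}, b is a walk from a_0 to b in which b occurs exactly once and whose locus is acyclic; and (iii) the segment a_i, ..., a_{j-1} is a closed walk beginning at b. -/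
variable {V : Type*}

/-- From any walk extract an injective walk (path) with the same endpoints,
using the same step relation and only vertices of the original walk. -/
lemma extract_path (R : V → V → Prop) :
    ∀ n (w : ℕ → V), (∀ k, k < n → R (w k) (w (k + 1))) →
    ∃ (m : ℕ) (q : ℕ → V), m ≤ n ∧ q 0 = w 0 ∧ q m = w n ∧
      (∀ k, k < m → R (q k) (q (k + 1))) ∧
      (∀ s, s ≤ m → ∀ t, t ≤ m → q s = q t → s = t) ∧
      (∀ k, k ≤ m → ∃ p, p ≤ n ∧ q k = w p) := by
  intro n
  induction n using Nat.strong_induction_on with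
  | _ n ih =>
  intro w hw
  by_cases hinj : ∀ s, s ≤ n → ∀ t, t ≤ n → w s = w t → s = t
  · exact ⟨n, w, le_rfl, rfl, rfl, hw, hinj, fun k hk => ⟨k, hk, rfl⟩⟩
  · push_neg at hinj
    obtain ⟨s, hs, t, ht, hval, hne⟩ := hinj
    have key : ∃ p r, p < r ∧ r ≤ n ∧ w p = w r := by
      rcases lt_or_gt_of_ne hne with h | h
      · exact ⟨s, t, h, ht, hval⟩
      · exact ⟨t, s, h, hs, hval.symm⟩
    obtain ⟨p, r, hpr, hrn, hwpr⟩ := key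
    set d := r - p with hd
    set w' : ℕ → V := fun k => if k ≤ p then w k else w (k + d) with hw'
    have hlen : n - d < n := by omega
    have hw'walk : ∀ k, k < n - d → R (w' k) (w' (k + 1)) := by
      intro k hk
      by_cases h1 : k + 1 ≤ p
      · have h2 : k ≤ p := by omega
        simpa [hw', h1, h2] using hw k (by omega)
      · by_cases h2 : k ≤ p
        · have hkp : k = p := by omega
          have e1 : w' k = w r := by simp [hw', h2]; rw [hkp]; exact hwpr
          have e2 : w' (k + 1) = w (r + 1) := by
            simp only [hw', if_neg h1]; congr 1; omega
          rw [e1, e2]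
          exact hw r (by omega)
        · have e1 : w' k = w (k + d) := by simp [hw', h2]
          have e2 : w' (k + 1) = w (k + d + 1) := by
            simp only [hw', if_neg h1]; congr 1; omega
          rw [e1, e2]
          exact hw (k + d) (by omega)
    obtain ⟨m, q, hm, hq0, hqm, hqstep, hqinj, hqmem⟩ := ih (n - d) hlen w' hw'walk
    refine ⟨m, q, by omega, ?_, ?_, hqstep, hqinj, ?_⟩
    · rw [hq0]; simp [hw']
    · rw [hqm]
      by_cases h : n - d ≤ p
      · have h1 : n - d = p := by omega
        have h2 : r = n := by omega
        simp only [hw', if_pos h]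
        rw [h1, hwpr, h2]
      · simp only [hw', if_neg h]
        congr 1; omega
    · intro k hk
      obtain ⟨p', hp', he⟩ := hqmem k hk
      by_cases h : p' ≤ p
      · exact ⟨p', by omega, by simpa [hw', h] using he⟩
      · exact ⟨p' + d, by omega, by simpa [hw', h] using he⟩

lemma exists_greatest (P : ℕ → Prop) (n : ℕ) (h : ∃ k, k ≤ n ∧ P k) :
    ∃ m, m ≤ n ∧ P m ∧ ∀ k, k ≤ n → P k → k ≤ m := by
  induction n with
  | zero =>
    obtain ⟨k, hk, hPk⟩ := h
    have : k = 0 := by omega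
    exact ⟨0, le_rfl, this ▸ hPk, fun k hk' _ => hk'⟩
  | succ n ihn =>
    by_cases hP : P (n + 1)
    · exact ⟨n + 1, le_rfl, hP, fun k hk _ => hk⟩
    · obtain ⟨k, hk, hPk⟩ := h
      have hk' : k ≤ n := by
        rcases Nat.lt_succ_iff_lt_or_eq.mp (Nat.lt_succ_of_le hk) with h | h
        · omega
        · exact absurd (h ▸ hPk) hP
      obtain ⟨m, hm, hPm, hmax⟩ := ihn ⟨k, hk', hPk⟩
      refine ⟨m, by omega, hPm, fun k' hk'' hPk' => ?_⟩
      have : k' ≤ n := by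
        rcases Nat.lt_succ_iff_lt_or_eq.mp (Nat.lt_succ_of_le hk'') with h | h
        · omega
        · exact absurd (h ▸ hPk') hP
      exact hmax k' this hPk'

lemma inj_bound {n N : ℕ} (c : ℕ → V) (f : ℕ → V)
    (hinj : ∀ s, s < n → ∀ t, t < n → c s = c t → s = t)
    (hmem : ∀ t, t < n → ∃ p, p ≤ N ∧ c t = f p) : n ≤ N + 1 := by
  by_contra hcon
  push_neg at hcon
  have hchoice : ∀ t : Fin n, ∃ p : Fin (N + 1), c t = f p := by
    intro t
    obtain ⟨p, hp, he⟩ := hmem t t.2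
    exact ⟨⟨p, by omega⟩, he⟩
  choose g hg using hchoice
  have hginj : Function.Injective g := by
    intro t1 t2 hEq
    have : c t1 = c t2 := by rw [hg t1, hg t2, hEq]
    exact Fin.ext (hinj _ t1.2 _ t2.2 this)
  have := Fintype.card_le_of_injective g hginj
  simp at this
  omega

/-- **Isthmus decomposition of a mixed closed walk** (Lemma 3.5).  Let `a` be a closed
walk of length ℓ in an ℓ-quasi-acyclic graph, with `a 0` passive and containing an
active vertex.  Let `b = a i` be the first active vertex and `j` the largest index
with `a j = b`.  Then (i) the segment `a j, …, a (ℓ-1), a 0` is an acyclic walk from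
`b` to `a 0` in which `b` occurs exactly once; (ii) the segment `a 0, …, a (i-1), b`
is an acyclic walk from `a 0` to `b` in which `b` occurs exactly once; and (iii) the
segment `a i, …, a (j-1)` is a closed walk beginning at `b`. -/
theorem isthmus_decomposition (G : SimpleGraph V) (D : Set V) (ℓ : ℕ)
    (htc : TotallyConnected G D) (hqa : QuasiAcyclic G D ℓ)
    (a : ℕ → V) (ht : IsTour G a ℓ)
    (hmixed : ∃ k, k < ℓ ∧ a k ∈ D) (h0 : a 0 ∉ D)
    (i : ℕ) (hiℓ : i < ℓ) (hiD : a i ∈ D) (hifirst : ∀ k, k < i → a k ∉ D)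
    (j : ℕ) (hij : i ≤ j) (hjℓ : j < ℓ) (hja : a j = a i)
    (hjlast : ∀ k, k < ℓ → a k = a i → k ≤ j) :
    -- (i)  a j, …, a (ℓ-1), a 0 : acyclic walk from b to a 0, b occurring exactly once
    (IsWalk G (fun k => a ((j + k) % ℓ)) (ℓ - j) ∧
      (∀ k, 0 < k → k ≤ ℓ - j → a ((j + k) % ℓ) ≠ a i) ∧
      WalkAcyclic (fun k => a ((j + k) % ℓ)) (ℓ - j)) ∧
    -- (ii) a 0, …, a (i-1), b : acyclic walk from a 0 to b, b occurring exactly once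
    (IsWalk G a i ∧ (∀ k, k < i → a k ≠ a i) ∧ WalkAcyclic a i) ∧
    -- (iii) a i, …, a (j-1) : closed walk beginning at b
    IsTour G (fun k => a (i + k)) (j - i) := by

  classical
  have hi1 : 1 ≤ i := by
    rcases Nat.eq_zero_or_pos i with h | h
    · exact absurd (h ▸ hiD) h0
    · exact h
  have hAdj : ∀ k, k < ℓ → k + 1 < ℓ → G.Adj (a k) (a (k + 1)) := by
    intro k hk hk1
    have := ht k hk
    rwa [Nat.mod_eq_of_lt hk1] at this
  -- walk edges of segment (ii) are G-edges
  have hwe2 : ∀ u v, walkEdge a i u v → G.Adj u v := by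
    rintro u v ⟨p, hp, (⟨h1, h2⟩ | ⟨h1, h2⟩)⟩
    · rw [← h1, ← h2]; exact hAdj p (by omega) (by omega)
    · rw [← h1, ← h2]; exact (hAdj p (by omega) (by omega)).symm
  -- walk edges of segment (i) are G-edges
  have hseg : ∀ p, p < ℓ - j → G.Adj (a ((j + p) % ℓ)) (a ((j + (p + 1)) % ℓ)) := by
    intro p hp
    have h1 : (j + p) % ℓ = j + p := Nat.mod_eq_of_lt (by omega)
    have h2 : j + (p + 1) = (j + p) + 1 := by omega
    rw [h1, h2]
    exact ht (j + p) (by omega)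
  have hwe1 : ∀ u v, walkEdge (fun k => a ((j + k) % ℓ)) (ℓ - j) u v → G.Adj u v := by
    rintro u v ⟨p, hp, (⟨h1, h2⟩ | ⟨h1, h2⟩)⟩
    · rw [← h1, ← h2]; exact hseg p hp
    · rw [← h1, ← h2]; exact (hseg p hp).symm
  -- acyclicity of segment (ii)
  have hacyc2 : WalkAcyclic a i := by
    rintro ⟨c, n, hn3, hcinj, hce⟩
    have hmem : ∀ t, t < n → ∃ p, p ≤ i ∧ c t = a p := by
      intro t htn
      obtain ⟨p, hp, h⟩ := hce t htn
      rcases h with ⟨h1, _⟩ | ⟨_, h2⟩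
      · exact ⟨p, by omega, h1.symm⟩
      · exact ⟨p + 1, by omega, h2.symm⟩
    have hnℓ : n ≤ ℓ := le_trans (inj_bound c a hcinj hmem) (by omega)
    have hcD := hqa c n hnℓ ⟨hn3, hcinj, fun t htn => hwe2 _ _ (hce t htn)⟩
    have hne01 : c 0 ≠ c 1 := fun h => by
      have := hcinj 0 (by omega) 1 (by omega) h; omega
    obtain ⟨t, htn, htne⟩ : ∃ t, t < n ∧ c t ≠ a i := by
      by_cases h : c 0 = a i
      · exact ⟨1, by omega, fun h1 => hne01 (h.trans h1.symm)⟩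
      · exact ⟨0, by omega, h⟩
    obtain ⟨p, hp, he⟩ := hmem t htn
    have hpi : p < i := by
      rcases eq_or_lt_of_le hp with h | h
      · exact absurd (h ▸ he) htne
      · exact h
    exact hifirst p hpi (he ▸ hcD t htn)
  -- acyclicity of segment (i) : the main argument
  have hacyc1 : WalkAcyclic (fun k => a ((j + k) % ℓ)) (ℓ - j) := by
    rintro ⟨c, n, hn3, hcinj, hce⟩
    have hmem : ∀ t, t < n → ∃ p, p ≤ ℓ - j ∧ c t = a ((j + p) % ℓ) := by
      intro t htn
      obtain ⟨p, hp, h⟩ := hce t htn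
      rcases h with ⟨h1, _⟩ | ⟨_, h2⟩
      · exact ⟨p, by omega, h1.symm⟩
      · exact ⟨p + 1, by omega, h2.symm⟩
    have hnℓ : n ≤ ℓ :=
      le_trans (inj_bound c (fun p => a ((j + p) % ℓ)) hcinj hmem) (by omega)
    have hcD := hqa c n hnℓ ⟨hn3, hcinj, fun t htn => hwe1 _ _ (hce t htn)⟩
    have hne01 : c 0 ≠ c 1 := fun h => by
      have := hcinj 0 (by omega) 1 (by omega) h; omega
    -- there is a D-vertex at some index strictly between j and ℓ
    have hexD : ∃ m, m ≤ ℓ - 1 ∧ (j < m ∧ a m ∈ D) := by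
      obtain ⟨t, htn, htne⟩ : ∃ t, t < n ∧ c t ≠ a i := by
        by_cases h : c 0 = a i
        · exact ⟨1, by omega, fun h1 => hne01 (h.trans h1.symm)⟩
        · exact ⟨0, by omega, h⟩
      obtain ⟨p, hpL, he⟩ := hmem t htn
      have hD := hcD t htn
      have hpL' : p < ℓ - j := by
        rcases eq_or_lt_of_le hpL with h | h
        · exfalso
          have hz : (j + p) % ℓ = 0 := by
            have : j + p = ℓ := by omega
            rw [this, Nat.mod_self]
          rw [hz] at he
          exact h0 (he ▸ hD)
        · exact h
      have hmod : (j + p) % ℓ = j + p := Nat.mod_eq_of_lt (by omega)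
      have hp0 : 0 < p := by
        rcases Nat.eq_zero_or_pos p with h | h
        · exfalso
          rw [h, Nat.add_zero, Nat.mod_eq_of_lt hjℓ, hja] at he
          exact htne he
        · exact h
      refine ⟨j + p, by omega, by omega, ?_⟩
      rw [hmod] at he
      exact he ▸ hD
    obtain ⟨M, hMℓ, ⟨hMj, hMD⟩, hMmax⟩ :=
      exists_greatest (fun m => j < m ∧ a m ∈ D) (ℓ - 1) hexD
    have hbM : a i ≠ a M := fun h => by
      have := hjlast M (by omega) h.symm; omega
    have hMnot : ∀ k, M < k → k < ℓ → a k ∉ D := by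
      intro k h1 h2 hD
      have := hMmax k (by omega) ⟨by omega, hD⟩
      omega
    -- path q2 : from a 0 to a i = b through passive vertices
    obtain ⟨m2, q2, hm2, hq20, hq2m, hq2step, hq2inj, hq2mem⟩ :=
      extract_path G.Adj i a (fun k hk => hAdj k (by omega) (by omega))
    have hq2D : ∀ k, k < m2 → q2 k ∉ D := by
      intro k hk hD
      obtain ⟨p, hp, he⟩ := hq2mem k (le_of_lt hk)
      rcases eq_or_lt_of_le hp with h | h
      · have : q2 k = q2 m2 := by rw [he, h, hq2m]
        have := hq2inj k (by omega) m2 le_rfl this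
        omega
      · exact hifirst p h (he ▸ hD)
    -- walk w1 : a 0, a (ℓ-1), ..., a M  (reverse direction)
    set w1 : ℕ → V := fun k => a ((ℓ - k) % ℓ) with hw1def
    have hw1step : ∀ k, k < ℓ - M → G.Adj (w1 k) (w1 (k + 1)) := by
      intro k hk
      by_cases h : k = 0
      · subst h
        have e1 : w1 0 = a 0 := by simp [hw1def]
        have e2 : w1 1 = a (ℓ - 1) := by
          simp only [hw1def]
          rw [Nat.mod_eq_of_lt (by omega)]
        rw [e1, e2]
        have := ht (ℓ - 1) (by omega)
        have hz : (ℓ - 1 + 1) % ℓ = 0 := by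
          rw [show ℓ - 1 + 1 = ℓ by omega, Nat.mod_self]
        rw [hz] at this
        exact this.symm
      · have e1 : w1 k = a (ℓ - k) := by
          simp only [hw1def]; rw [Nat.mod_eq_of_lt (by omega)]
        have e2 : w1 (k + 1) = a (ℓ - k - 1) := by
          simp only [hw1def]
          rw [show ℓ - (k + 1) = ℓ - k - 1 by omega, Nat.mod_eq_of_lt (by omega)]
        rw [e1, e2]
        have := ht (ℓ - k - 1) (by omega)
        rw [show (ℓ - k - 1 + 1) % ℓ = ℓ - k by
          rw [show ℓ - k - 1 + 1 = ℓ - k by omega]; exact Nat.mod_eq_of_lt (by omega)] at this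
        exact this.symm
    obtain ⟨m1, q1, hm1, hq10, hq1m, hq1step, hq1inj, hq1mem⟩ :=
      extract_path G.Adj (ℓ - M) w1 hw1step
    have hq10' : q1 0 = a 0 := by rw [hq10]; simp [hw1def]
    have hq1m' : q1 m1 = a M := by
      rw [hq1m]
      simp only [hw1def]
      rw [show ℓ - (ℓ - M) = M by omega, Nat.mod_eq_of_lt (by omega)]
    have hq1D : ∀ k, k < m1 → q1 k ∉ D := by
      intro k hk hD
      obtain ⟨p, hp, he⟩ := hq1mem k (le_of_lt hk)
      by_cases hp0 : p = 0
      · rw [hp0] at he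
        simp only [hw1def] at he
        simp at he
        exact h0 (he ▸ hD)
      · by_cases hpe : p = ℓ - M
        · have : q1 k = q1 m1 := by
            rw [he, hpe, hq1m]
          have := hq1inj k (by omega) m1 le_rfl this
          omega
        · have hidx : (ℓ - p) % ℓ = ℓ - p := Nat.mod_eq_of_lt (by omega)
          simp only [hw1def, hidx] at he
          exact hMnot (ℓ - p) (by omega) (by omega) (he ▸ hD)
    have hm1pos : 0 < m1 := by
      rcases Nat.eq_zero_or_pos m1 with h | h
      · exfalso
        have : a 0 = a M := by rw [← hq10', ← hq1m', h]
        exact h0 (this ▸ hMD)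
      · exact h
    have hm2pos : 0 < m2 := by
      rcases Nat.eq_zero_or_pos m2 with h | h
      · exfalso
        have : a 0 = a i := by rw [← hq20, ← hq2m, h]
        exact h0 (this ▸ hiD)
      · exact h
    -- last point of q1 that meets q2
    obtain ⟨t, htm1, ⟨u, hum2, htu⟩, htmax⟩ :=
      exists_greatest (fun k => ∃ u, u ≤ m2 ∧ q1 k = q2 u) m1
        ⟨0, by omega, 0, by omega, by rw [hq10', hq20]⟩
    have htlt : t < m1 := by
      rcases eq_or_lt_of_le htm1 with h | h
      · exfalso
        rw [h, hq1m'] at htu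
        rcases eq_or_lt_of_le hum2 with h2 | h2
        · rw [h2, hq2m] at htu
          exact hbM htu.symm
        · exact hq2D u h2 (htu ▸ hMD)
      · exact h
    have hq1tD : q1 t ∉ D := hq1D t htlt
    have hult : u < m2 := by
      rcases eq_or_lt_of_le hum2 with h | h
      · exfalso
        rw [h, hq2m] at htu
        exact hq1tD (htu ▸ hiD)
      · exact h
    -- the forbidden cycle
    set n' := (m2 - u) + 1 + (m1 - t) with hn'def
    set c' : ℕ → V :=
      fun k => if k ≤ m2 - u then q2 (u + k) else q1 (m1 + (m2 - u) + 1 - k) with hc'def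
    have hMi : i + 1 ≤ M := by omega
    have hn'ℓ : n' ≤ ℓ := by omega
    have hc'cyc : IsCycleOn G.Adj c' n' := by
      refine ⟨by omega, ?_, ?_⟩
      · intro s hs t' ht' he
        by_cases h1 : s ≤ m2 - u <;> by_cases h2 : t' ≤ m2 - u
        · simp only [hc'def, if_pos h1, if_pos h2] at he
          have := hq2inj (u + s) (by omega) (u + t') (by omega) he
          omega
        · exfalso
          simp only [hc'def, if_pos h1, if_neg h2] at he
          have hidx1 : t + 1 ≤ m1 + (m2 - u) + 1 - t' := by omega
          have hidx2 : m1 + (m2 - u) + 1 - t' ≤ m1 := by omega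
          have := htmax (m1 + (m2 - u) + 1 - t') hidx2 ⟨u + s, by omega, he.symm⟩
          omega
        · exfalso
          simp only [hc'def, if_neg h1, if_pos h2] at he
          have hidx1 : t + 1 ≤ m1 + (m2 - u) + 1 - s := by omega
          have hidx2 : m1 + (m2 - u) + 1 - s ≤ m1 := by omega
          have := htmax (m1 + (m2 - u) + 1 - s) hidx2 ⟨u + t', by omega, he⟩
          omega
        · simp only [hc'def, if_neg h1, if_neg h2] at he
          have := hq1inj (m1 + (m2 - u) + 1 - s) (by omega)
            (m1 + (m2 - u) + 1 - t') (by omega) he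
          omega
      · intro k hk
        by_cases hlast : k + 1 < n'
        · rw [Nat.mod_eq_of_lt hlast]
          by_cases h1 : k + 1 ≤ m2 - u
          · have h0' : k ≤ m2 - u := by omega
            simp only [hc'def, if_pos h1, if_pos h0']
            have : u + (k + 1) = (u + k) + 1 := by omega
            rw [this]
            exact hq2step (u + k) (by omega)
          · by_cases h2 : k ≤ m2 - u
            · -- k = m2 - u : edge from b to a M
              have hk2 : k = m2 - u := by omega
              have e1 : c' k = a i := by
                simp only [hc'def, if_pos h2]
                rw [hk2, show u + (m2 - u) = m2 by omega, hq2m]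
              have e2 : c' (k + 1) = a M := by
                simp only [hc'def, if_neg h1]
                rw [hk2, show m1 + (m2 - u) + 1 - (m2 - u + 1) = m1 by omega, hq1m']
              rw [e1, e2]
              exact htc (a i) hiD (a M) hMD hbM
            · -- both in q1 part, reversed steps
              have e1 : c' k = q1 (m1 + (m2 - u) + 1 - k) := by
                simp only [hc'def, if_neg h2]
              have e2 : c' (k + 1) = q1 (m1 + (m2 - u) + 1 - k - 1) := by
                simp only [hc'def, if_neg h1]
                congr 1
              rw [e1, e2]
              have hs : m1 + (m2 - u) + 1 - k - 1 < m1 := by omega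
              have := hq1step (m1 + (m2 - u) + 1 - k - 1) hs
              rw [show m1 + (m2 - u) + 1 - k - 1 + 1 = m1 + (m2 - u) + 1 - k by omega] at this
              exact this.symm
        · -- closing edge : q1 (t+1) -> q1 t = q2 u
          have hkn : k = n' - 1 := by omega
          have hmod : (k + 1) % n' = 0 := by
            rw [show k + 1 = n' by omega, Nat.mod_self]
          rw [hmod]
          have e1 : c' k = q1 (t + 1) := by
            simp only [hc'def, if_neg (show ¬ k ≤ m2 - u by omega)]
            congr 1; omega
          have e2 : c' 0 = q1 t := by
            simp only [hc'def, if_pos (show (0:ℕ) ≤ m2 - u by omega)]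
            rw [Nat.add_zero, htu]
          rw [e1, e2]
          exact (hq1step t htlt).symm
    have hall := hqa c' n' hn'ℓ hc'cyc 0 (by omega)
    have : c' 0 = q2 u := by
      simp only [hc'def, if_pos (show (0:ℕ) ≤ m2 - u by omega)]
      rw [Nat.add_zero]
    rw [this] at hall
    exact hq2D u hult hall
  refine ⟨⟨?_, ?_, hacyc1⟩, ⟨?_, ?_, hacyc2⟩, ?_⟩
  · -- (i) walk
    intro k hk
    exact hseg k hk
  · -- (i) b exactly once
    intro k hk0 hkL hEq
    by_cases h : j + k < ℓ
    · rw [Nat.mod_eq_of_lt h] at hEq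
      have := hjlast (j + k) h hEq
      omega
    · have hjk : j + k = ℓ := by omega
      rw [hjk, Nat.mod_self] at hEq
      exact h0 (hEq ▸ hiD)
  · -- (ii) walk
    intro k hk
    exact hAdj k (by omega) (by omega)
  · -- (ii) b exactly once
    intro k hk hEq
    exact hifirst k hk (hEq ▸ hiD)
  · -- (iii) tour
    intro k hk
    simp only
    by_cases h : k + 1 < j - i
    · rw [Nat.mod_eq_of_lt h]
      have := hAdj (i + k) (by omega) (by omega)
      rwa [show i + k + 1 = i + (k + 1) by omega] at this
    · have hmod : (k + 1) % (j - i) = 0 := by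
        rw [show k + 1 = j - i by omega, Nat.mod_self]
      rw [hmod, Nat.add_zero]
      have := hAdj (i + k) (by omega) (by omega)
      rw [show i + k + 1 = j by omega, hja] at this
      exact this
end

section
/- Let A be a structure interpreting key predicates as total irreflexive functions, let K be a left-prefix-closed set of binary path-functional dependencies, and suppose some κ = P[f̄, ḡ] ∈ K is violated in A, where f̄ = f_0⋯f_{k-1}. A violation at a ≠ b is critical if, writing a_0 = a, a_{i+1} = f_i^A(a_i), and b_0 = b, b_{i+1} = f_i^A(b_i), we have a_i ≠ b_i for all 0 ≤ i < k. Then some dependency κ' ∈ K is critically violated in A. -/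
/-- Successive application of the functions denoted by the word `w` of key predicates. -/
def wordApply {A F : Type*} (f : F → A → A) (w : List F) (a : A) : A :=
  w.foldl (fun x p => f p x) a

/-- `P[w, g]` is violated in the structure given by `f`: there are distinct elements
agreeing on their `w`-image and on their `g`-image. -/
def Violated {A F : Type*} (f : F → A → A) (w g : List F) : Prop :=
  ∃ a b : A, a ≠ b ∧ wordApply f w a = wordApply f w b ∧
    wordApply f g a = wordApply f g b

/-- `P[w, g]` is critically violated: a violating pair whose `w`-walks are disjoint at
every index up to `|w| - 1` (i.e. `a_i ≠ b_i` for all `0 ≤ i < |w|`). -/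
def CritViolated {A F : Type*} (f : F → A → A) (w g : List F) : Prop :=
  ∃ a b : A, a ≠ b ∧ wordApply f w a = wordApply f w b ∧
    wordApply f g a = wordApply f g b ∧
    ∀ i, i < w.length → wordApply f (w.take i) a ≠ wordApply f (w.take i) b

/-- **A left-prefix-closed set of binary path-functional dependencies with a violation
has a critical violation.** -/
theorem critical_violation_exists {A F : Type*} (f : F → A → A)
    (hirr : ∀ (p : F) (a : A), f p a ≠ a)
    (K : Set (List F × List F))
    (hclosed : ∀ w g : List F, (w, g) ∈ K → ∀ i, i ≤ w.length → (w.take i, g) ∈ K)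
    (hviol : ∃ w g : List F, (w, g) ∈ K ∧ Violated f w g) :
    ∃ w g : List F, (w, g) ∈ K ∧ CritViolated f w g := by
  classical
  obtain ⟨w, g, hK, a, b, hab, hw, hg⟩ := hviol
  have hex : ∃ j, wordApply f (w.take j) a = wordApply f (w.take j) b :=
    ⟨w.length, by simpa [List.take_length] using hw⟩
  have hje := Nat.find_spec hex
  set j := Nat.find hex with hj
  have hmin : ∀ i < j, wordApply f (w.take i) a ≠ wordApply f (w.take i) b :=
    fun i hi => Nat.find_min hex hi
  have hjle : j ≤ w.length := Nat.find_le (by simpa [List.take_length] using hw)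
  have hlen : (w.take j).length = j := by simp [hjle]
  refine ⟨w.take j, g, hclosed w g hK j hjle, a, b, hab, hje, hg, ?_⟩
  intro i hi
  rw [hlen] at hi
  rw [List.take_take, min_eq_left (le_of_lt hi)]
  exact hmin i hi
end

section
/- Let A be a structure interpreting key predicates as total irreflexive functions, and let κ = P[f̄ f, ḡ] be a binary path-functional dependency with last key predicate f on the left word. Then κ has a critical violation in A if and only if there exist elements c, d, e of A with c, d, e pairwise distinct, f^A(c) = d and f^A(e) = d, an element a with f̄^A(a) = c, an element b with f̄^A(b) = e, a ≠ b, and ḡ^A(a) = ḡ^A(b). -/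
lemma wordApply_append {A F : Type*} (f : F → A → A) (u v : List F) (a : A) :
    wordApply f (u ++ v) a = wordApply f v (wordApply f u a) := by
  simp [wordApply, List.foldl_append]

/-- **Characterization of critical violations.**  The binary path-functional dependency
`P[w ++ [p], g]` has a critical violation iff there are pairwise distinct `c`, `d`, `e`
with `f p c = d = f p e`, and elements `a ≠ b` with `w`-images `c` and `e` respectively
and equal `g`-images. -/
theorem critical_violation_iff {A F : Type*} (f : F → A → A)
    (hirr : ∀ (p : F) (a : A), f p a ≠ a) (w g : List F) (p : F) :
    CritViolated f (w ++ [p]) g ↔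
      ∃ c d e a b : A, c ≠ d ∧ d ≠ e ∧ c ≠ e ∧
        f p c = d ∧ f p e = d ∧
        wordApply f w a = c ∧ wordApply f w b = e ∧ a ≠ b ∧
        wordApply f g a = wordApply f g b := by
  constructor
  · rintro ⟨a, b, hab, heq, hg, hdis⟩
    refine ⟨wordApply f w a, f p (wordApply f w a), wordApply f w b, a, b,
      fun h => hirr p _ h.symm, ?_, ?_, rfl, ?_, rfl, rfl, hab, hg⟩
    · have h := heq
      rw [wordApply_append, wordApply_append] at h
      simp only [wordApply, List.foldl_cons, List.foldl_nil] at h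
      intro hc
      exact hirr p _ (h.symm.trans hc)
    · have := hdis w.length (by simp)
      rwa [List.take_left] at this
    · have h := heq
      rw [wordApply_append, wordApply_append] at h
      simp only [wordApply, List.foldl_cons, List.foldl_nil] at h
      exact h.symm
  · rintro ⟨c, d, e, a, b, hcd, hde, hce, hfc, hfe, hwa, hwb, hab, hg⟩
    refine ⟨a, b, hab, ?_, hg, ?_⟩
    · rw [wordApply_append, wordApply_append, hwa, hwb]
      simp only [wordApply, List.foldl_cons, List.foldl_nil]
      rw [hfc, hfe]
    · intro i hi hcontra
      have hile : i ≤ w.length := by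
        simpa using Nat.lt_succ_iff.mp (by simpa using hi)
      rw [List.take_append_of_le_length hile] at hcontra
      apply hce
      rw [← hwa, ← hwb, ← List.take_append_drop i w,
        wordApply_append, wordApply_append, hcontra]
end

section
/- Let G be a simple graph and let a_0, ..., a_{ℓ-1} be a closed walk (with a_ℓ = a_0) whose locus is acyclic, and whose first three vertices a_0, a_1, a_2 are pairwise distinct. Let i be the largest index with 2 ≤ i < ℓ and a_i = a_2, and let j be the largest index with i < j < ℓ and a_j = a_1 (these exist). Then a_{i+1} = a_1 and a_{j+1} = a_0, and the walk decomposes as a_0, a_1, (closed walk at a_2 from position 2 to i−1), a_2, (closed walk at a_1 from position i+1 to j−1), a_1, (closed walk at a_0 from position j+1 to ℓ−1), each of these three closed subwalks having acyclic locus. -/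
variable {V : Type*}

lemma isCycleOn_mono {R R' : V → V → Prop} (h : ∀ u w, R u w → R' u w)
    {c : ℕ → V} {n : ℕ} (hc : IsCycleOn R c n) : IsCycleOn R' c n :=
  ⟨hc.1, hc.2.1, fun i hi => h _ _ (hc.2.2 i hi)⟩

lemma tourEdge_symm (a : ℕ → V) (ℓ : ℕ) (u w : V) (h : tourEdge a ℓ u w) :
    tourEdge a ℓ w u := by
  obtain ⟨t, ht, h⟩ := h
  exact ⟨t, ht, h.symm⟩

lemma exists_cycle_of_detour {R : V → V → Prop}
    (hsymm : ∀ u w, R u w → R w u) (v : V) :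
    ∀ m : ℕ, ∀ b : ℕ → V, (∀ k, k < m → R (b k) (b (k + 1))) →
      (∀ k, k ≤ m → b k ≠ v) → R v (b 0) → R v (b m) → b 0 ≠ b m →
      ∃ c n, IsCycleOn R c n := by
  intro m
  induction m using Nat.strong_induction_on with
  | _ m ih =>
    intro b hw hv h0 hm hne
    by_cases hinj : ∀ p, p ≤ m → ∀ q, q ≤ m → b p = b q → p = q
    · have hm1 : 1 ≤ m := by
        rcases Nat.eq_zero_or_pos m with h | h
        · exact absurd (by rw [h]) hne
        · exact h
      refine ⟨fun k => if k = 0 then v else b (k - 1), m + 2, by omega, ?_, ?_⟩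
      · intro p hp q hq hpq
        by_cases hp0 : p = 0 <;> by_cases hq0 : q = 0
        · omega
        · exfalso
          simp only [hp0, if_pos, if_neg hq0] at hpq
          exact hv (q - 1) (by omega) hpq.symm
        · exfalso
          simp only [hq0, if_pos, if_neg hp0] at hpq
          exact hv (p - 1) (by omega) hpq
        · simp only [if_neg hp0, if_neg hq0] at hpq
          have := hinj (p - 1) (by omega) (q - 1) (by omega) hpq
          omega
      · intro k hk
        by_cases hk0 : k = 0
        · subst hk0
          have h1 : (0 + 1) % (m + 2) = 1 := Nat.mod_eq_of_lt (by omega)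
          simpa [h1] using h0
        · by_cases hkl : k = m + 1
          · subst hkl
            have h1 : (m + 1 + 1) % (m + 2) = 0 := by
              rw [show m + 1 + 1 = m + 2 from rfl, Nat.mod_self]
            simp only [h1, if_pos, if_neg (by omega : ¬ m + 1 = 0)]
            have : m + 1 - 1 = m := by omega
            rw [this]
            exact hsymm _ _ hm
          · have h1 : (k + 1) % (m + 2) = k + 1 := Nat.mod_eq_of_lt (by omega)
            simp only [h1, if_neg hk0, if_neg (by omega : ¬ k + 1 = 0)]
            have h2 : k + 1 - 1 = (k - 1) + 1 := by omega
            rw [h2]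
            exact hw (k - 1) (by omega)
    · push_neg at hinj
      obtain ⟨p, hp, q, hq, hbe, hpq⟩ := hinj
      have key : ∀ p q : ℕ, p < q → q ≤ m → b p = b q → ∃ c n, IsCycleOn R c n := by
        intro p q hpq hq hbe
        have hd1 : 1 ≤ q - p := by omega
        set b' : ℕ → V := fun k => if k < p then b k else b (k + (q - p)) with hb'
        have e0 : b' 0 = b 0 := by
          by_cases hp0 : 0 < p
          · simp [hb', hp0]
          · have : p = 0 := by omega
            subst this
            simp only [hb', if_neg (by omega : ¬ (0:ℕ) < 0)]
            simpa using hbe.symm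
        have em : b' (m - (q - p)) = b m := by
          simp only [hb', if_neg (by omega : ¬ m - (q - p) < p)]
          congr 1
          omega
        refine ih (m - (q - p)) (by omega) b' ?_ ?_ ?_ ?_ ?_
        · intro k hk
          by_cases hkp : k < p
          · simp only [hb', if_pos hkp]
            by_cases h1 : k + 1 < p
            · simpa [if_pos h1] using hw k (by omega)
            · have hk1 : k + 1 = p := by omega
              simp only [if_neg h1]
              have e : b (k + 1 + (q - p)) = b (k + 1) := by
                rw [hk1, show p + (q - p) = q by omega]
                exact hbe.symm
              rw [e]
              exact hw k (by omega)
          · simp only [hb', if_neg hkp, if_neg (by omega : ¬ k + 1 < p)]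
            rw [show k + 1 + (q - p) = k + (q - p) + 1 by omega]
            exact hw (k + (q - p)) (by omega)
        · intro k hk
          by_cases hkp : k < p
          · simp only [hb', if_pos hkp]
            exact hv k (by omega)
          · simp only [hb', if_neg hkp]
            exact hv (k + (q - p)) (by omega)
        · rw [e0]; exact h0
        · rw [em]; exact hm
        · rw [e0, em]; exact hne
      rcases hpq.lt_or_gt with hlt | hlt
      · exact key p q hlt hq hbe
      · exact key q p hlt hp hbe.symm

lemma sub_tour (G : SimpleGraph V) (a : ℕ → V) (ℓ s L : ℕ)
    (hsL : s + L ≤ ℓ) (ht : IsTour G a ℓ) (hac : TourAcyclic a ℓ)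
    (hclose : a ((s + L) % ℓ) = a s) :
    IsTour G (fun k => a (s + k)) L ∧ TourAcyclic (fun k => a (s + k)) L := by
  have hmod : ∀ k, k < L → a ((s + k + 1) % ℓ) = a (s + (k + 1) % L) := by
    intro k hk
    rcases Nat.lt_or_ge (k + 1) L with h | h
    · rw [Nat.mod_eq_of_lt h, Nat.mod_eq_of_lt (by omega), Nat.add_assoc]
    · have hkL : k + 1 = L := by omega
      have e : s + k + 1 = s + L := by omega
      rw [e, hclose, hkL, Nat.mod_self, Nat.add_zero]
  constructor
  · intro k hk
    have := ht (s + k) (by omega)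
    rwa [hmod k hk] at this
  · rintro ⟨c, n, hc⟩
    refine hac ⟨c, n, isCycleOn_mono ?_ hc⟩
    intro u w hw
    obtain ⟨t, htL, hor⟩ := hw
    refine ⟨s + t, by omega, ?_⟩
    rcases hor with ⟨h1, h2⟩ | ⟨h1, h2⟩
    · exact Or.inl ⟨h1, by rw [hmod t htL]; exact h2⟩
    · exact Or.inr ⟨h1, by rw [hmod t htL]; exact h2⟩

lemma isTour_zero (G : SimpleGraph V) (b : ℕ → V) : IsTour G b 0 :=
  fun k hk => absurd hk (Nat.not_lt_zero k)

lemma tourAcyclic_zero (b : ℕ → V) : TourAcyclic b 0 := by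
  rintro ⟨c, n, h3, _, he⟩
  obtain ⟨t, ht, _⟩ := he 0 (by omega)
  omega

/-- **Decomposition of an acyclic closed walk with three distinct initial vertices**
(Lemma `cond_i` specialized to graphs).  If `a` is a closed walk of length ℓ with
acyclic locus and `a 0, a 1, a 2` pairwise distinct, then, letting `i` be the largest
index in `[2, ℓ)` with `a i = a 2` and `j` the largest index in `(i, ℓ)` with
`a j = a 1` (both exist), we have `a (i+1) = a 1`, `a (j+1) = a 0`, and the walk
decomposes into the two edges `a 0 – a 1`, `a 1 – a 2` (each traversed in both
directions) with an acyclic closed excursion attached at each of `a 2`, `a 1`, `a 0`. -/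
theorem acyclic_tour_decomposition (G : SimpleGraph V) (a : ℕ → V) (ℓ : ℕ)
    (hℓ : 3 ≤ ℓ) (ht : IsTour G a ℓ) (hac : TourAcyclic a ℓ)
    (h01 : a 0 ≠ a 1) (h02 : a 0 ≠ a 2) (h12 : a 1 ≠ a 2) :
    ∃ i j : ℕ,
      (2 ≤ i ∧ i < ℓ ∧ a i = a 2 ∧ ∀ k, 2 ≤ k → k < ℓ → a k = a 2 → k ≤ i) ∧
      (i < j ∧ j < ℓ ∧ a j = a 1 ∧ ∀ k, i < k → k < ℓ → a k = a 1 → k ≤ j) ∧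
      a (i + 1) = a 1 ∧ a ((j + 1) % ℓ) = a 0 ∧
      -- closed walk at a 2 from position 2 to i-1, with acyclic locus
      (IsTour G (fun k => a (2 + k)) (i - 2) ∧
        TourAcyclic (fun k => a (2 + k)) (i - 2)) ∧
      -- closed walk at a 1 from position i+1 to j-1, with acyclic locus
      (IsTour G (fun k => a (i + 1 + k)) (j - (i + 1)) ∧
        TourAcyclic (fun k => a (i + 1 + k)) (j - (i + 1))) ∧
      -- closed walk at a 0 from position j+1 to ℓ-1, with acyclic locus
      (IsTour G (fun k => a (j + 1 + k)) (ℓ - (j + 1)) ∧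
        TourAcyclic (fun k => a (j + 1 + k)) (ℓ - (j + 1))) := by
    classical
  have hℓ0 : 0 < ℓ := by omega
  set i := Nat.findGreatest (fun k => 2 ≤ k ∧ a k = a 2) (ℓ - 1) with hi_def
  have hP12 : 2 ≤ 2 ∧ a 2 = a 2 := ⟨le_refl 2, rfl⟩
  have h2i : 2 ≤ i := Nat.le_findGreatest (P := fun k => 2 ≤ k ∧ a k = a 2) (by omega) hP12
  have hiℓ : i < ℓ := by
    have := Nat.findGreatest_le (P := fun k => 2 ≤ k ∧ a k = a 2) (ℓ - 1)
    omega
  have hai : a i = a 2 := (Nat.findGreatest_spec (P := fun k => 2 ≤ k ∧ a k = a 2) (by omega) hP12).2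
  have himax : ∀ k, 2 ≤ k → k < ℓ → a k = a 2 → k ≤ i := fun k h2k hkℓ hk =>
    Nat.le_findGreatest (P := fun k => 2 ≤ k ∧ a k = a 2) (by omega) ⟨h2k, hk⟩
  -- Claim 1: the walk returns from a 2 along the edge a 1 – a 2.
  have hclaim1 : a ((i + 1) % ℓ) = a 1 := by
    by_contra hne
    set m := ℓ - i with hm_def
    set b : ℕ → V := fun k => if k < m then a ((i + 1 + k) % ℓ) else a 1 with hb
    have hb0 : b 0 = a ((i + 1) % ℓ) := by
      simp only [hb, if_pos (show 0 < m by omega)]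
    have hbm : b m = a 1 := by simp [hb]
    refine hac (exists_cycle_of_detour (tourEdge_symm a ℓ) (a 2) m b ?_ ?_ ?_ ?_ ?_)
    · intro k hk
      rcases Nat.lt_or_ge (k + 1) m with h | h
      · simp only [hb, if_pos hk, if_pos h]
        refine ⟨(i + 1 + k) % ℓ, Nat.mod_lt _ hℓ0, Or.inl ⟨rfl, ?_⟩⟩
        rw [Nat.mod_add_mod, show i + 1 + k + 1 = i + 1 + (k + 1) by omega]
      · have hk1 : k + 1 = m := by omega
        have e : i + 1 + k = ℓ := by omega
        simp only [hb, if_pos hk, if_neg (show ¬ k + 1 < m by omega), e, Nat.mod_self]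
        exact ⟨0, hℓ0, Or.inl ⟨rfl, by rw [Nat.mod_eq_of_lt (by omega)]⟩⟩
    · intro k hk
      rcases Nat.lt_or_ge k m with h | h
      · simp only [hb, if_pos h]
        rcases Nat.lt_or_ge (k + 1) m with h' | h'
        · have hlt : i + 1 + k < ℓ := by omega
          rw [Nat.mod_eq_of_lt hlt]
          intro hk2
          have := himax (i + 1 + k) (by omega) hlt hk2
          omega
        · have e : i + 1 + k = ℓ := by omega
          rw [e, Nat.mod_self]
          exact h02
      · simp only [hb, if_neg (show ¬ k < m by omega)]
        exact h12
    · rw [hb0, ← hai]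
      exact ⟨i, hiℓ, Or.inl ⟨rfl, rfl⟩⟩
    · rw [hbm]
      exact ⟨1, by omega, Or.inr ⟨rfl, by rw [Nat.mod_eq_of_lt (by omega)]⟩⟩
    · rw [hb0, hbm]; exact hne
  have hi1ℓ : i + 1 < ℓ := by
    rcases Nat.lt_or_ge (i + 1) ℓ with h | h
    · exact h
    · exfalso
      rw [show i + 1 = ℓ by omega, Nat.mod_self] at hclaim1
      exact h01 hclaim1
  have hai1 : a (i + 1) = a 1 := by rwa [Nat.mod_eq_of_lt hi1ℓ] at hclaim1
  set j := Nat.findGreatest (fun k => i < k ∧ a k = a 1) (ℓ - 1) with hj_def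
  have hP2i1 : i < i + 1 ∧ a (i + 1) = a 1 := ⟨Nat.lt_succ_self i, hai1⟩
  have hij : i < j :=
    lt_of_lt_of_le (Nat.lt_succ_self i) (Nat.le_findGreatest (P := fun k => i < k ∧ a k = a 1) (by omega) hP2i1)
  have hjℓ : j < ℓ := by
    have := Nat.findGreatest_le (P := fun k => i < k ∧ a k = a 1) (ℓ - 1)
    omega
  have haj : a j = a 1 := (Nat.findGreatest_spec (P := fun k => i < k ∧ a k = a 1) (by omega) hP2i1).2
  have hjmax : ∀ k, i < k → k < ℓ → a k = a 1 → k ≤ j := fun k h1 h2 h3 =>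
    Nat.le_findGreatest (P := fun k => i < k ∧ a k = a 1) (by omega) ⟨h1, h3⟩
  -- Claim 2: the walk returns from a 1 along the edge a 0 – a 1.
  have hclaim2 : a ((j + 1) % ℓ) = a 0 := by
    rcases Nat.lt_or_ge (j + 1) ℓ with hj1 | hj1
    · by_contra hne
      set m := ℓ - (j + 1) with hm_def
      set b : ℕ → V := fun k => a ((j + 1 + k) % ℓ) with hb
      have hbm : b m = a 0 := by
        simp only [hb, show j + 1 + m = ℓ by omega, Nat.mod_self]
      have hb0 : b 0 = a (j + 1) := by
        simp only [hb, Nat.add_zero, Nat.mod_eq_of_lt hj1]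
      refine hac (exists_cycle_of_detour (tourEdge_symm a ℓ) (a 1) m b ?_ ?_ ?_ ?_ ?_)
      · intro k hk
        refine ⟨(j + 1 + k) % ℓ, Nat.mod_lt _ hℓ0, Or.inl ⟨rfl, ?_⟩⟩
        simp only [hb]
        rw [Nat.mod_add_mod, show j + 1 + k + 1 = j + 1 + (k + 1) by omega]
      · intro k hk
        rcases Nat.lt_or_ge k m with h | h
        · have hlt : j + 1 + k < ℓ := by omega
          simp only [hb, Nat.mod_eq_of_lt hlt]
          intro hk2
          have := hjmax (j + 1 + k) (by omega) hlt hk2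
          omega
        · have hkm : k = m := by omega
          rw [hkm, hbm]
          exact h01
      · rw [hb0, ← haj]
        exact ⟨j, hjℓ, Or.inl ⟨rfl, by rw [Nat.mod_eq_of_lt hj1]⟩⟩
      · rw [hbm]
        exact ⟨0, hℓ0, Or.inr ⟨rfl, by rw [Nat.mod_eq_of_lt (by omega)]⟩⟩
      · rw [hb0, hbm]
        rwa [Nat.mod_eq_of_lt hj1] at hne
    · rw [show j + 1 = ℓ by omega, Nat.mod_self]
  refine ⟨i, j, ⟨h2i, hiℓ, hai, himax⟩, ⟨hij, hjℓ, haj, hjmax⟩, hai1, hclaim2, ?_, ?_, ?_⟩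
  · have := sub_tour G a ℓ 2 (i - 2) (by omega) ht hac ?_
    · exact this
    · rw [show 2 + (i - 2) = i by omega, Nat.mod_eq_of_lt hiℓ, hai]
  · have := sub_tour G a ℓ (i + 1) (j - (i + 1)) (by omega) ht hac ?_
    · exact this
    · rw [show i + 1 + (j - (i + 1)) = j by omega, Nat.mod_eq_of_lt hjℓ, haj, hai1]
  · rcases Nat.lt_or_ge (j + 1) ℓ with hj1 | hj1
    · have := sub_tour G a ℓ (j + 1) (ℓ - (j + 1)) (by omega) ht hac ?_
      · exact this
      · rw [show j + 1 + (ℓ - (j + 1)) = ℓ by omega, Nat.mod_self,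
          ← Nat.mod_eq_of_lt hj1, hclaim2]
    · rw [show ℓ - (j + 1) = 0 by omega]
      exact ⟨isTour_zero G _, tourAcyclic_zero _⟩
end

section
/- Let X be a finite set and for each bit-string s with |s| ≤ p let f_s : X → {u ∈ ℕ^m : u ≤ C} be functions (componentwise order). Suppose given natural numbers y_{s,u} for each s and each u ≤ C, and ŷ_{s,v,w} for each s with |s| < p and vectors v, w with v + w ≤ C, satisfying: |X| = Σ_u y_{ε,u}; y_{s,u} = Σ{ ŷ_{s,v,w} : v + w = u } for |s| < p; y_{s0,v} = Σ{ ŷ_{s,v,w} : v + w ≤ C }; and y_{s1,w} = Σ{ ŷ_{s,v,w} : v + w ≤ C }. Then there exists a family of functions f_s : X → ℕ^m such that |f_s^{-1}(u)| = y_{s,u} for all s, u, and f_{s0}(a) + f_{s1}(a) = f_s(a) for all a ∈ X and all s with |s| < p. -/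
/-!
The spectra are built top-down. Given an assignment `g` at a node `s` realizing the counts
`y s`, take the multiset in which each pair `(v, w)` with `v + w ≤ C` occurs `ŷ s v w` times.
The first consistency condition says that over every value `u` this multiset has as many pairs
with `v + w = u` as `g` has elements with value `u`, so `X` can be matched with it fibrewise;
the two coordinates of the match split `g` into the assignments of the children, and the other
two conditions say that their counts are `y (s0)` and `y (s1)`. The subtrees below `[false]`
and `[true]` are instances of the same problem, so induction on the depth finishes the proof.
-/

attribute [local instance] Classical.propDecidable

open Finset

theorem card_filter_comp_eq_sum_card_filter {X κ ι : Type*} [Fintype X] [Fintype κ]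
    [DecidableEq κ] [DecidableEq ι] (h : X → κ) (ψ : κ → ι) (j : ι) :
    #{a | ψ (h a) = j} = ∑ k with ψ k = j, #{a | h a = k} := by
  rw [card_eq_sum_card_fiberwise (f := h) (t := {k | ψ k = j}) (fun a ha => by simpa using ha)]
  refine sum_congr rfl fun k hk => congrArg card ?_
  ext a
  simp only [mem_filter, mem_univ, true_and] at hk ⊢
  exact ⟨And.right, fun hak => ⟨hak ▸ hk, hak⟩⟩

theorem card_filter_sigma_fst {κ : Type*} [Fintype κ] (n : κ → ℕ) (P : κ → Prop)
    [DecidablePred P] : #{w : Σ k, Fin (n k) | P w.1} = ∑ k with P k, n k := by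
  rw [show ({w : Σ k, Fin (n k) | P w.1} : Finset _) = ({k | P k} : Finset κ).sigma fun _ => univ
    by ext; simp, card_sigma]
  simp

theorem exists_lift_card_filter_eq {X ι κ : Type*} [Fintype X] [Fintype κ] [DecidableEq ι]
    [DecidableEq κ] (g : X → ι) (π : κ → ι) (n : κ → ℕ)
    (hn : ∀ i, #{a | g a = i} = ∑ k with π k = i, n k) :
    ∃ h : X → κ, (∀ a, π (h a) = g a) ∧ ∀ k, #{a | h a = k} = n k := by
  let W := Σ k, Fin (n k)
  let e : X ≃ W := Equiv.ofFiberEquiv (g := fun w : W => π w.1) fun i =>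
    Fintype.equivOfCardEq <| by
      rw [Fintype.card_subtype, Fintype.card_subtype, hn, card_filter_sigma_fst n (π · = i)]
  refine ⟨fun a => (e a).1, fun a => Equiv.ofFiberEquiv_map (g := fun w : W => π w.1) _ a,
    fun k => ?_⟩
  rw [card_equiv e (t := {w : W | w.1 = k}) (by simp), card_filter_sigma_fst n (· = k),
    filter_eq', if_pos (mem_univ k), sum_singleton]

theorem sum_prod_coe_sort {α β N : Type*} [AddCommMonoid N] (s : Finset α) (t : Finset β)
    (F : α → β → N) : ∑ k : s × t, F k.1 k.2 = ∑ v ∈ s, ∑ w ∈ t, F v w := by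
  rw [Fintype.sum_prod_type, ← sum_coe_sort s]
  exact sum_congr rfl fun v _ => sum_coe_sort t (F v)

section

variable {M X : Type*} [AddCommMonoid M] [PartialOrder M] [LocallyFiniteOrder M] [DecidableEq M]
  [Fintype X] {C : M}

def RealizesCounts (C : M) (n : M → ℕ) (g : X → M) : Prop :=
  (∀ a, g a ≤ C) ∧ ∀ u ∈ Icc 0 C, #{a | g a = u} = n u

/-- `nhat v w` is the number of elements whose value is to split into `v` and `w`. -/
structure IsCountSplit (C : M) (n n₀ n₁ : M → ℕ) (nhat : M → M → ℕ) : Prop where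
  total : ∀ u ∈ Icc 0 C,
    n u = ∑ v ∈ Icc 0 C, ∑ w ∈ Icc 0 C, if v + w = u then nhat v w else 0
  left : ∀ v ∈ Icc 0 C, n₀ v = ∑ w ∈ Icc 0 C, if v + w ≤ C then nhat v w else 0
  right : ∀ w ∈ Icc 0 C, n₁ w = ∑ v ∈ Icc 0 C, if v + w ≤ C then nhat v w else 0

theorem exists_realizesCounts_of_card_eq {n : M → ℕ}
    (hX : Fintype.card X = ∑ u ∈ Icc 0 C, n u) : ∃ g : X → M, RealizesCounts C n g := by
  obtain ⟨h, -, hcard⟩ := exists_lift_card_filter_eq (fun _ : X => ()) (fun _ : Icc 0 C => ())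
    (fun k => n k) (fun _ => by simp [hX, sum_attach])
  refine ⟨fun a => h a, fun a => (mem_Icc.1 (h a).2).2, fun u hu => ?_⟩
  refine (card_filter_comp_eq_sum_card_filter h (fun k => (k : M)) u).trans ?_
  simp only [hcard, sum_filter, sum_coe_sort (Icc 0 C) fun v => if v = u then n v else 0,
    sum_ite_eq', if_pos hu]

theorem RealizesCounts.card_filter_eq_sum [CanonicallyOrderedAdd M] {n n₀ n₁ : M → ℕ}
    {nhat : M → M → ℕ} {g : X → M} (hg : RealizesCounts C n g)
    (hs : IsCountSplit C n n₀ n₁ nhat) (i : M) :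
    #{a | g a = i} = ∑ v ∈ Icc 0 C, ∑ w ∈ Icc 0 C,
      if v + w = i then if v + w ≤ C then nhat v w else 0 else 0 := by
  by_cases hi : i ∈ Icc 0 C
  · rw [hg.2 i hi, hs.total i hi]
    refine sum_congr rfl fun v _ => sum_congr rfl fun w _ => ?_
    by_cases hvw : v + w = i
    · rw [if_pos hvw, if_pos hvw, if_pos (hvw ▸ (mem_Icc.1 hi).2)]
    · rw [if_neg hvw, if_neg hvw]
  · have hgi : #{a | g a = i} = 0 :=
      card_eq_zero.2 <| filter_eq_empty_iff.2 fun a _ hai =>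
        hi (mem_Icc.2 ⟨zero_le, hai ▸ hg.1 a⟩)
    refine hgi.trans (Eq.symm <| sum_eq_zero fun v _ => sum_eq_zero fun w _ => ?_)
    split_ifs with hvw hle
    · exact absurd (mem_Icc.2 ⟨zero_le, hvw ▸ hle⟩) hi
    all_goals rfl

theorem RealizesCounts.exists_split [CanonicallyOrderedAdd M] {n n₀ n₁ : M → ℕ}
    {nhat : M → M → ℕ} {g : X → M} (hg : RealizesCounts C n g)
    (hs : IsCountSplit C n n₀ n₁ nhat) :
    ∃ g₀ g₁ : X → M, RealizesCounts C n₀ g₀ ∧ RealizesCounts C n₁ g₁ ∧ g₀ + g₁ = g := by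
  obtain ⟨h, hπ, hcard⟩ := exists_lift_card_filter_eq g
    (fun k : Icc 0 C × Icc 0 C => (k.1 : M) + k.2)
    (fun k => if (k.1 : M) + k.2 ≤ C then nhat k.1 k.2 else 0) fun i => by
      rw [sum_filter, sum_prod_coe_sort (F := fun v w =>
        if v + w = i then if v + w ≤ C then nhat v w else 0 else 0)]
      exact hg.card_filter_eq_sum hs i
  refine ⟨fun a => (h a).1, fun a => (h a).2,
    ⟨fun a => (mem_Icc.1 (h a).1.2).2, fun v hv => ?_⟩,
    ⟨fun a => (mem_Icc.1 (h a).2.2).2, fun w hw => ?_⟩, funext hπ⟩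
  · refine (card_filter_comp_eq_sum_card_filter h (fun k => (k.1 : M)) v).trans ?_
    rw [hs.left v hv]
    simp only [hcard, sum_filter]
    rw [sum_prod_coe_sort (F := fun x y =>
      if x = v then if x + y ≤ C then nhat x y else 0 else 0), sum_comm]
    simp only [sum_ite_eq', if_pos hv]
  · refine (card_filter_comp_eq_sum_card_filter h (fun k => (k.2 : M)) w).trans ?_
    rw [hs.right w hw]
    simp only [hcard, sum_filter]
    rw [sum_prod_coe_sort (F := fun x y =>
      if y = w then if x + y ≤ C then nhat x y else 0 else 0)]
    simp only [sum_ite_eq', if_pos hw]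

theorem RealizesCounts.exists_tree_realization [CanonicallyOrderedAdd M] {p : ℕ}
    {y : List Bool → M → ℕ} {yhat : List Bool → M → M → ℕ} {g : X → M}
    (hg : RealizesCounts C (y []) g)
    (hs : ∀ s : List Bool, s.length < p →
      IsCountSplit C (y s) (y (s ++ [false])) (y (s ++ [true])) (yhat s)) :
    ∃ f : List Bool → X → M, f [] = g ∧
      (∀ s, s.length ≤ p → RealizesCounts C (y s) (f s)) ∧
      ∀ s, s.length < p → f (s ++ [false]) + f (s ++ [true]) = f s := by
  induction p generalizing y yhat g with
  | zero =>
    refine ⟨fun _ => g, rfl, fun s hs => ?_, fun s hs => absurd hs s.length.not_lt_zero⟩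
    rwa [List.eq_nil_of_length_eq_zero (Nat.le_zero.1 hs)]
  | succ p ih =>
    obtain ⟨g₀, g₁, hg₀, hg₁, rfl⟩ := hg.exists_split (hs [] p.succ_pos)
    -- the subtree below the child `b` is an instance of the same problem, one level shallower
    choose F hF₀ hF hFadd using fun b : Bool =>
      ih (y := fun t => y (b :: t)) (yhat := fun t => yhat (b :: t))
        (g := bif b then g₁ else g₀) (by cases b <;> assumption)
        fun t ht => hs (b :: t) (Nat.succ_lt_succ ht)
    refine ⟨fun | [] => g₀ + g₁ | b :: t => F b t, rfl, ?_, ?_⟩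
    · rintro (_ | ⟨b, t⟩) hlen
      · exact hg
      · exact hF b t (Nat.le_of_succ_le_succ hlen)
    · rintro (_ | ⟨b, t⟩) hlen
      · change F false [] + F true [] = g₀ + g₁
        rw [hF₀, hF₀]
        rfl
      · exact hFadd b t (Nat.lt_of_succ_lt_succ hlen)

end

/-- **Realization of consistent spectrum counts** (cf. Lemma `tech_lem`).  Given
counting data `y s u` (how many elements should have spectrum `u` at tree node `s`)
and `ŷ s v w` (how many elements at node `s` should split their spectrum into `v` at
child `s0` and `w` at child `s1`), consistent in the stated sense, there is an actual
assignment `f` of spectra to the elements of `X` realizing all the counts and additive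
along the binary tree. -/
theorem spectrum_realization {X : Type*} [Fintype X] (m p : ℕ) (C : Fin m → ℕ)
    (y : List Bool → (Fin m → ℕ) → ℕ)
    (yhat : List Bool → (Fin m → ℕ) → (Fin m → ℕ) → ℕ)
    (h0 : Fintype.card X = ∑ u ∈ Finset.Icc 0 C, y [] u)
    (h1 : ∀ s : List Bool, s.length < p → ∀ u ∈ Finset.Icc 0 C,
      y s u = ∑ v ∈ Finset.Icc 0 C, ∑ w ∈ Finset.Icc 0 C,
        if v + w = u then yhat s v w else 0)
    (h2 : ∀ s : List Bool, s.length < p → ∀ v ∈ Finset.Icc 0 C,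
      y (s ++ [false]) v = ∑ w ∈ Finset.Icc 0 C, if v + w ≤ C then yhat s v w else 0)
    (h3 : ∀ s : List Bool, s.length < p → ∀ w ∈ Finset.Icc 0 C,
      y (s ++ [true]) w = ∑ v ∈ Finset.Icc 0 C, if v + w ≤ C then yhat s v w else 0) :
    ∃ f : List Bool → X → (Fin m → ℕ),
      (∀ (s : List Bool) (a : X), s.length ≤ p → f s a ≤ C) ∧
      (∀ s : List Bool, s.length ≤ p → ∀ u ∈ Finset.Icc 0 C,
        (Finset.univ.filter (fun a : X => f s a = u)).card = y s u) ∧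
      (∀ (a : X) (s : List Bool), s.length < p →
        f (s ++ [false]) a + f (s ++ [true]) a = f s a) := by
  obtain ⟨g, hg⟩ := exists_realizesCounts_of_card_eq h0
  obtain ⟨f, -, hf, hadd⟩ :=
    hg.exists_tree_realization (yhat := yhat) fun s hs => ⟨h1 s hs, h2 s hs, h3 s hs⟩
  exact ⟨f, fun s a hs => (hf s hs).1 a, fun s hs => (hf s hs).2,
    fun a s hs => congrFun (hadd s hs) a⟩
end

section
/- Let A be a finite set, m ≥ 1, and suppose A is partitioned into nonempty classes A_π (indexed by 'types' π) each of size at least 3mC for a constant C ≥ 1. Suppose each element a ∈ A_π must be assigned at most mC outgoing 'witnesses' in specified target classes A_ρ, where each target class requirement at a is a number n_{a,ρ} ≥ 0 with Σ_ρ n_{a,ρ} ≤ mC, and a witness assigned to a in class A_ρ must be an element of A_ρ not assigned as a witness to any other element and distinct from a. Then if each class A_π is partitioned into three subclasses A_{π,0}, A_{π,1}, A_{π,2} of size ≥ mC each, and each element of A_{π,j} takes its witnesses in class ρ only from A_{ρ, j+1 mod 3}, all requirements can be simultaneously satisfied: there is an injective-per-receiver assignment meeting every n_{a,ρ}. -/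
/-!
Each source `a` in block `j` takes its `n a ρ` witnesses of type `ρ` from block `j + 1` of
class `ρ`, which is large enough since `n a ρ ≤ ∑ ρ', n a ρ' ≤ m * C`. Witnesses for distinct
types lie in distinct classes, so they never collide. A witness never lies in the block of its
source, and two elements cannot witness each other because that would need `j + 1 + 1 = j`,
i.e. `2 = 0` in `ZMod 3`.
-/

open Finset

theorem Finset.exists_subset_family_card_eq {α ι : Type*} (S : ι → Finset α) (n : ι → ℕ)
    (hn : ∀ i, n i ≤ #(S i)) : ∃ w : ι → Finset α, ∀ i, w i ⊆ S i ∧ #(w i) = n i :=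
  ⟨fun i => (exists_subset_card_eq (hn i)).choose,
    fun i => (exists_subset_card_eq (hn i)).choose_spec⟩

theorem ZMod.three_add_one_ne_self (j : ZMod 3) : j + 1 ≠ j :=
  add_ne_left.mpr (by decide)

theorem ZMod.three_add_one_add_one_ne_self (j : ZMod 3) : j + 1 + 1 ≠ j := by
  rw [add_assoc]
  exact add_ne_left.mpr (by decide)

theorem circular_witnessing_general {A T : Type*} [Fintype A]
    [Fintype T] [DecidableEq T]
    (m C : ℕ)
    (typ : A → T) (blk : A → ZMod 3)
    (hblk : ∀ (π : T) (j : ZMod 3),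
      m * C ≤ (Finset.univ.filter (fun x : A => typ x = π ∧ blk x = j)).card)
    (n : A → T → ℕ) (hn : ∀ a : A, (∑ ρ : T, n a ρ) ≤ m * C) :
    ∃ w : A → T → Finset A,
      (∀ (a : A) (ρ : T), (w a ρ).card = n a ρ) ∧
      (∀ (a : A) (ρ : T), ∀ x ∈ w a ρ, typ x = ρ ∧ blk x = blk a + 1 ∧ x ≠ a) ∧
      (∀ (a : A) (ρ ρ' : T), ρ ≠ ρ' → Disjoint (w a ρ) (w a ρ')) ∧
      (∀ (a x : A) (ρ ρ' : T), x ∈ w a ρ → a ∉ w x ρ') := by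
  have hfits (a : A) (ρ : T) :
      n a ρ ≤ #(univ.filter fun x : A => typ x = ρ ∧ blk x = blk a + 1) :=
    calc n a ρ ≤ ∑ ρ', n a ρ' := single_le_sum (fun _ _ => Nat.zero_le _) (mem_univ ρ)
      _ ≤ m * C := hn a
      _ ≤ _ := hblk ρ (blk a + 1)
  obtain ⟨w, hw⟩ := exists_subset_family_card_eq (ι := A × T) _ _ fun p => hfits p.1 p.2
  have hmem {a x : A} {ρ : T} (hx : x ∈ w (a, ρ)) : typ x = ρ ∧ blk x = blk a + 1 := by
    simpa using (hw (a, ρ)).1 hx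
  refine ⟨fun a ρ => w (a, ρ), fun a ρ => (hw (a, ρ)).2, ?_, ?_, ?_⟩
  · rintro a ρ x hx
    refine ⟨(hmem hx).1, (hmem hx).2, ?_⟩
    rintro rfl
    exact ZMod.three_add_one_ne_self (blk x) (hmem hx).2.symm
  · refine fun a ρ ρ' hne => disjoint_left.mpr fun x hx hx' => hne ?_
    rw [← (hmem hx).1, ← (hmem hx').1]
  · intro a x ρ ρ' hx ha
    apply ZMod.three_add_one_add_one_ne_self (blk a)
    rw [← (hmem hx).2, (hmem ha).2]

/-- **Circular witnessing.**  Elements of a finite set `A` are partitioned into type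
classes (via `typ`), each split into three blocks (via `blk`, valued in `ZMod 3`) of
size at least `m * C`.  Each element `a` requires `n a ρ` witnesses of type `ρ`, with
at most `m * C` witnesses required in total, and an element of block `j` must draw its
witnesses of type `ρ` from block `j + 1` of class `ρ`.  Then all requirements can be
simultaneously satisfied: witnesses of a single source are pairwise distinct and
distinct from the source, lie in the prescribed class and block, and no two elements
ever serve as witnesses of one another. -/
theorem circular_witnessing {A T : Type*} [Fintype A] [DecidableEq A]
    [Fintype T] [DecidableEq T]
    (m C : ℕ) (hm : 1 ≤ m) (hC : 1 ≤ C)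
    (typ : A → T) (blk : A → ZMod 3)
    (hblk : ∀ (π : T) (j : ZMod 3),
      m * C ≤ (Finset.univ.filter (fun x : A => typ x = π ∧ blk x = j)).card)
    (n : A → T → ℕ) (hn : ∀ a : A, (∑ ρ : T, n a ρ) ≤ m * C) :
    ∃ w : A → T → Finset A,
      (∀ (a : A) (ρ : T), (w a ρ).card = n a ρ) ∧
      (∀ (a : A) (ρ : T), ∀ x ∈ w a ρ, typ x = ρ ∧ blk x = blk a + 1 ∧ x ≠ a) ∧
      (∀ (a : A) (ρ ρ' : T), ρ ≠ ρ' → Disjoint (w a ρ) (w a ρ')) ∧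
      (∀ (a x : A) (ρ ρ' : T), x ∈ w a ρ → a ∉ w x ρ') :=
  circular_witnessing_general m C typ blk hblk n hn
end
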